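/- arXiv:2412.08834 — 3 statements merged into one kernel-verified Lean document; each statement's English description precedes it below -/
import Mathlib

section
/- Let a, b, m be as above (m'' + b m' = a² m, a > 0, b ≥ 0, continuous) and suppose there exists t₀ ≥ 0 with e^{B(t₀)} m'(t₀) m(t₀) < 0. Then for all t ∈ [0, t₀], m(t) ≠ 0 and m'(t) ≠ 0; in particular m and m' each have constant sign on [0, t₀]. -/
open MeasureTheory Real Set

/-!
Multiplying the equation by `e^{B} m` shows that `e^{B} m' m` has derivative
`e^{B} (m'² + a² m²) ≥ 0`, so it is nondecreasing on `[0, ∞)`. Being negative at `t₀`, it is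
negative on `[0, t₀]`, hence neither `m` nor `m'` vanishes there, and the intermediate value
theorem gives each of them a constant sign.
-/

theorem IsPreconnected.forall_pos_or_forall_neg {X α : Type*} [TopologicalSpace X]
    [LinearOrder α] [TopologicalSpace α] [OrderClosedTopology α] [Zero α] {s : Set X}
    (hs : IsPreconnected s) {f : X → α} (hf : ContinuousOn f s) (hne : ∀ x ∈ s, f x ≠ 0) :
    (∀ x ∈ s, 0 < f x) ∨ (∀ x ∈ s, f x < 0) := by
  by_contra! h
  obtain ⟨⟨x, hx, hfx⟩, ⟨y, hy, hfy⟩⟩ := h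
  obtain ⟨z, hz, hfz⟩ := hs.intermediate_value hx hy hf ⟨hfx, hfy⟩
  exact hne z hz hfz

theorem hasDerivAt_exp_mul_deriv_mul {m B : ℝ → ℝ} {β m'' t : ℝ} (hB : HasDerivAt B β t)
    (hm : DifferentiableAt ℝ m t) (hm' : HasDerivAt (deriv m) m'' t) :
    HasDerivAt (fun t ↦ exp (B t) * deriv m t * m t)
      (exp (B t) * ((m'' + β * deriv m t) * m t + deriv m t ^ 2)) t := by
  refine ((hB.exp.mul hm').mul hm.hasDerivAt).congr_deriv ?_
  simp only [Pi.mul_apply]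
  ring

theorem monotoneOn_exp_mul_deriv_mul {m b c B : ℝ → ℝ} {D : Set ℝ} (hD : Convex ℝ D)
    (hm : ContDiff ℝ 2 m) (hB : ∀ t, HasDerivAt B (b t) t) (hc : ∀ t ∈ D, 0 ≤ c t)
    (hode : ∀ t ∈ D, deriv (deriv m) t + b t * deriv m t = c t * m t) :
    MonotoneOn (fun t ↦ exp (B t) * deriv m t * m t) D := by
  have hm₁ : Differentiable ℝ m := hm.differentiable two_ne_zero
  have hderiv t := hasDerivAt_exp_mul_deriv_mul (hB t) (hm₁ t)
    (hm.differentiable_deriv_two t).hasDerivAt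
  refine monotoneOn_of_hasDerivWithinAt_nonneg hD
    (fun t _ ↦ (hderiv t).continuousAt.continuousWithinAt)
    (fun t _ ↦ (hderiv t).hasDerivWithinAt) fun t ht ↦ ?_
  rw [hode t (interior_subset ht), mul_assoc (c t)]
  have hcm := mul_nonneg (hc t (interior_subset ht)) (mul_self_nonneg (m t))
  exact mul_nonneg (exp_pos _).le (add_nonneg hcm (sq_nonneg _))

theorem stmt_8_general (a b m : ℝ → ℝ)
    (hb_cont : Continuous b)
    (hm : ContDiff ℝ 2 m)
    (hode : ∀ t ≥ (0:ℝ), deriv (deriv m) t + b t * deriv m t = (a t) ^ 2 * m t)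
    (B : ℝ → ℝ) (hB : ∀ t, B t = ∫ r in (0:ℝ)..t, b r)
    (t₀ : ℝ)
    (hneg : Real.exp (B t₀) * deriv m t₀ * m t₀ < 0) :
    (∀ t ∈ Icc 0 t₀, m t ≠ 0 ∧ deriv m t ≠ 0) ∧
    ((∀ t ∈ Icc 0 t₀, 0 < m t) ∨ (∀ t ∈ Icc 0 t₀, m t < 0)) ∧
    ((∀ t ∈ Icc 0 t₀, 0 < deriv m t) ∨ (∀ t ∈ Icc 0 t₀, deriv m t < 0)) := by
  have hB' t : HasDerivAt B (b t) t := by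
    rw [funext hB]
    exact (hb_cont.integral_hasStrictDerivAt 0 t).hasDerivAt
  have hmono := monotoneOn_exp_mul_deriv_mul (convex_Ici 0) hm hB'
    (fun t _ ↦ sq_nonneg (a t)) hode
  have hprod : ∀ t ∈ Icc 0 t₀, deriv m t * m t < 0 := fun t ht ↦ by
    have hlt : exp (B t) * deriv m t * m t < 0 :=
      (hmono ht.1 (ht.1.trans ht.2) ht.2).trans_lt hneg
    rw [mul_assoc] at hlt
    exact neg_of_mul_neg_right hlt (exp_pos _).le
  have hne : ∀ t ∈ Icc 0 t₀, m t ≠ 0 ∧ deriv m t ≠ 0 := fun t ht ↦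
    ⟨right_ne_zero_of_mul (hprod t ht).ne, left_ne_zero_of_mul (hprod t ht).ne⟩
  exact ⟨hne,
    isPreconnected_Icc.forall_pos_or_forall_neg hm.continuous.continuousOn
      fun t ht ↦ (hne t ht).1,
    isPreconnected_Icc.forall_pos_or_forall_neg (hm.continuous_deriv one_le_two).continuousOn
      fun t ht ↦ (hne t ht).2⟩

theorem stmt_8 (a b m : ℝ → ℝ) (ha_cont : Continuous a) (ha_pos : ∀ t, 0 < a t)
    (hb_cont : Continuous b) (hb_nonneg : ∀ t, 0 ≤ b t)
    (hm : ContDiff ℝ 2 m)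
    (hode : ∀ t ≥ (0:ℝ), deriv (deriv m) t + b t * deriv m t = (a t) ^ 2 * m t)
    (B : ℝ → ℝ) (hB : ∀ t, B t = ∫ r in (0:ℝ)..t, b r)
    (t₀ : ℝ) (ht₀ : 0 ≤ t₀)
    (hneg : Real.exp (B t₀) * deriv m t₀ * m t₀ < 0) :
    (∀ t ∈ Icc 0 t₀, m t ≠ 0 ∧ deriv m t ≠ 0) ∧
    ((∀ t ∈ Icc 0 t₀, 0 < m t) ∨ (∀ t ∈ Icc 0 t₀, m t < 0)) ∧
    ((∀ t ∈ Icc 0 t₀, 0 < deriv m t) ∨ (∀ t ∈ Icc 0 t₀, deriv m t < 0)) :=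
  stmt_8_general a b m hb_cont hm hode B hB t₀ hneg
end

section
/- Let φ(x) = ∫_{S^{N-1}} e^{x·ω} dS(ω) with N ≥ 2. Then there exists a constant C > 0 such that for all x ∈ ℝ^N, φ(x) ≤ C e^{|x|} (1+|x|)^{-(N-1)/2}. -/
/-! Write `x = r • p` with `‖p‖ = 1`. On the unit sphere `⟪x, ω⟫ = r - r ‖ω - p‖² / 2`, so it
suffices to bound `∫ exp (-s ‖ω - p‖² / 2) dσ(ω)` by `O(s ^ (-(N - 1) / 2))`. The caps
`sphere 0 1 ∩ closedBall p t` have measure `O(t ^ (N - 1))`: for `t ≤ 3/4` they are images of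
`t`-balls of `pᗮ` under the `3`-Lipschitz graph map `y ↦ y + √(1 - ‖y‖²) • p`. Cutting the sphere
into the shells `k ≤ √s ‖ω - p‖ < k + 1`, where the integrand is at most `exp (-k² / 2)`, the
integral is at most `s ^ (-(N - 1) / 2) * ∑ₖ (k + 1) ^ (N - 1) * exp (-k / 2)` up to a constant. -/

open MeasureTheory Real Set
open Metric Module
open scoped NNReal ENNReal

lemma abs_sqrt_sub_sqrt_le {a b c : ℝ} (hc : 0 < c) (ha : c ^ 2 ≤ a) (hb : c ^ 2 ≤ b) :
    |√a - √b| ≤ |a - b| / (2 * c) := by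
  have hca : c ≤ √a := Real.le_sqrt_of_sq_le ha
  have hcb : c ≤ √b := Real.le_sqrt_of_sq_le hb
  have hab : a - b = (√a - √b) * (√a + √b) := by
    rw [mul_comm, ← sq_sub_sq, sq_sqrt (by nlinarith), sq_sqrt (by nlinarith)]
  rw [le_div_iff₀ (by positivity), hab, abs_mul, abs_of_pos (by linarith : 0 < √a + √b)]
  gcongr
  linarith

lemma lipschitzOnWith_sqrt_one_sub_norm_sq {F : Type*} [SeminormedAddCommGroup F] :
    LipschitzOnWith 2 (fun y : F => √(1 - ‖y‖ ^ 2)) (closedBall 0 (3 / 4)) := by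
  refine LipschitzOnWith.of_dist_le_mul fun y hy z hz => ?_
  rw [mem_closedBall_zero_iff] at hy hz
  have hsq : ∀ w : F, ‖w‖ ≤ 3 / 4 → (1 / 2 : ℝ) ^ 2 ≤ 1 - ‖w‖ ^ 2 := fun w hw => by
    nlinarith [norm_nonneg w]
  calc dist (√(1 - ‖y‖ ^ 2)) (√(1 - ‖z‖ ^ 2))
      ≤ |(1 - ‖y‖ ^ 2) - (1 - ‖z‖ ^ 2)| / (2 * (1 / 2)) :=
        abs_sqrt_sub_sqrt_le (by norm_num) (hsq y hy) (hsq z hz)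
    _ = |‖z‖ - ‖y‖| * (‖z‖ + ‖y‖) := by
        rw [← abs_of_nonneg (by positivity : 0 ≤ ‖z‖ + ‖y‖), ← abs_mul]; ring_nf
    _ ≤ dist y z * 2 := by
        gcongr
        · rw [abs_sub_comm, dist_eq_norm]; exact abs_norm_sub_norm_le y z
        · linarith
    _ = 2 * dist y z := mul_comm _ _

lemma summable_succ_pow_mul_exp_neg_half (n : ℕ) :
    Summable fun k : ℕ => ((k : ℝ) + 1) ^ n * exp (-(k / 2)) := by
  have h := (summable_nat_add_iff 1).mpr
    (Real.summable_pow_mul_exp_neg_nat_mul n (by norm_num : (0 : ℝ) < 1 / 2))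
  refine (h.mul_left (exp (1 / 2))).congr fun k => ?_
  push_cast
  rw [mul_left_comm, ← exp_add]
  ring_nf

section Chart

variable {E : Type*} [NormedAddCommGroup E] [InnerProductSpace ℝ E]

noncomputable def hemisphereChart (p : E) (y : (ℝ ∙ p)ᗮ) : E :=
  y + √(1 - ‖y‖ ^ 2) • p

lemma lipschitzOnWith_hemisphereChart {p : E} (hp : ‖p‖ = 1) :
    LipschitzOnWith 3 (hemisphereChart p) (closedBall 0 (3 / 4)) := by
  refine LipschitzOnWith.of_dist_le_mul fun y hy z hz => ?_
  have hsqrt := lipschitzOnWith_sqrt_one_sub_norm_sq.dist_le_mul y hy z hz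
  calc dist (hemisphereChart p y) (hemisphereChart p z)
      = ‖(y - z : E) + (√(1 - ‖y‖ ^ 2) - √(1 - ‖z‖ ^ 2)) • p‖ := by
        rw [dist_eq_norm, hemisphereChart, hemisphereChart, sub_smul]; abel_nf
    _ ≤ dist y z + dist (√(1 - ‖y‖ ^ 2)) (√(1 - ‖z‖ ^ 2)) := by
        refine (norm_add_le _ _).trans ?_
        rw [norm_smul, hp, mul_one, dist_eq_norm, dist_eq_norm, Real.norm_eq_abs]
        rfl
    _ ≤ 3 * dist y z := by push_cast at hsqrt ⊢; linarith

lemma sphere_inter_closedBall_subset_image_hemisphereChart {p : E} (hp : ‖p‖ = 1) {t : ℝ}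
    (ht : t ≤ 1) : sphere (0 : E) 1 ∩ closedBall p t ⊆ hemisphereChart p '' closedBall 0 t := by
  rintro ω ⟨hω, hωp⟩
  rw [mem_sphere_zero_iff_norm] at hω
  rw [mem_closedBall, dist_eq_norm] at hωp
  set c : ℝ := inner ℝ p ω
  have hy : ω - c • p ∈ (ℝ ∙ p)ᗮ := by
    rw [Submodule.mem_orthogonal_singleton_iff_inner_right, inner_sub_right, inner_smul_right,
      real_inner_self_eq_norm_sq, hp]
    ring
  have hnorm_y : ‖ω - c • p‖ ^ 2 = 1 - c ^ 2 := by
    rw [norm_sub_sq_real, inner_smul_right, norm_smul, real_inner_comm, hω, hp, Real.norm_eq_abs,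
      mul_pow, sq_abs]
    ring
  have hdist : ‖ω - p‖ ^ 2 = 2 - 2 * c := by
    rw [norm_sub_sq_real, hω, hp, real_inner_comm]; ring
  have ht0 : 0 ≤ t := (norm_nonneg _).trans hωp
  have hdist_le : 2 - 2 * c ≤ t ^ 2 := hdist ▸ pow_le_pow_left₀ (norm_nonneg _) hωp 2
  have hc : 0 ≤ c := by nlinarith
  refine ⟨⟨ω - c • p, hy⟩, ?_, ?_⟩
  · rw [mem_closedBall_zero_iff, Submodule.coe_norm]
    nlinarith [norm_nonneg (ω - c • p)]
  · change (ω - c • p) + √(1 - ‖ω - c • p‖ ^ 2) • p = ω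
    rw [hnorm_y, sub_sub_cancel, sqrt_sq hc, sub_add_cancel]

/- The slack `2 ≥ dist ω p ^ 2 / 2` turns the width `r` of the Gaussian into `1 + r`, which makes
the estimate uniform down to `x = 0`. -/
lemma inner_smul_le_of_norm_eq_one {p ω : E} (hp : ‖p‖ = 1) (hω : ‖ω‖ = 1) (r : ℝ) :
    inner ℝ (r • p) ω ≤ r + 2 - (1 + r) * dist ω p ^ 2 / 2 := by
  have hinner : inner ℝ p ω = 1 - dist ω p ^ 2 / 2 := by
    rw [dist_eq_norm, norm_sub_sq_real, hω, hp, real_inner_comm]; ring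
  have hdist_le : dist ω p ^ 2 ≤ 4 := by
    nlinarith [dist_le_norm_add_norm ω p, dist_nonneg (x := ω) (y := p)]
  rw [real_inner_smul_left, hinner]
  linarith

lemma exists_norm_eq_one_and_eq_norm_smul [Nontrivial E] (x : E) :
    ∃ p : E, ‖p‖ = 1 ∧ x = ‖x‖ • p := by
  rcases eq_or_ne x 0 with rfl | hx
  · obtain ⟨p, hp⟩ := exists_norm_eq E zero_le_one
    exact ⟨p, hp, by simp⟩
  · refine ⟨‖x‖⁻¹ • x, norm_smul_inv_norm hx, ?_⟩
    rw [smul_smul, mul_inv_cancel₀ (norm_ne_zero_iff.mpr hx), one_smul]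

end Chart

lemma hausdorffMeasure_ball_euclideanSpace_lt_top (n : ℕ) :
    μH[n] (ball (0 : EuclideanSpace ℝ (Fin n)) 1) < ∞ := by
  have h : (n : ℝ) = finrank ℝ (EuclideanSpace ℝ (Fin n)) := by simp
  rw [h]
  exact measure_ball_lt_top

section HausdorffSphere

variable {E : Type*} [NormedAddCommGroup E] [InnerProductSpace ℝ E] [MeasurableSpace E]
  [BorelSpace E] {n : ℕ} [Fact (finrank ℝ E = n + 1)]

lemma hausdorffMeasure_sphere_inter_closedBall_le {p : E} (hp : ‖p‖ = 1) {t : ℝ} (ht0 : 0 ≤ t)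
    (ht : t ≤ 3 / 4) :
    μH[n] (sphere (0 : E) 1 ∩ closedBall p t) ≤
      3 ^ n * ENNReal.ofReal (t ^ n) * μH[n] (ball (0 : EuclideanSpace ℝ (Fin n)) 1) := by
  have hp0 : p ≠ 0 := norm_ne_zero_iff.mp (by rw [hp]; exact one_ne_zero)
  let e := (OrthonormalBasis.fromOrthogonalSpanSingleton (𝕜 := ℝ) n hp0).repr.toIsometryEquiv
  calc μH[n] (sphere (0 : E) 1 ∩ closedBall p t)
      ≤ μH[n] (hemisphereChart p '' closedBall 0 t) :=
        measure_mono (sphere_inter_closedBall_subset_image_hemisphereChart hp (by linarith))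
    _ ≤ ((3 : ℝ≥0) : ℝ≥0∞) ^ (n : ℝ) * μH[n] (closedBall (0 : (ℝ ∙ p)ᗮ) t) :=
        ((lipschitzOnWith_hemisphereChart hp).mono
          (closedBall_subset_closedBall ht)).hausdorffMeasure_image_le n.cast_nonneg
    _ = 3 ^ n * μH[n] (closedBall (0 : EuclideanSpace ℝ (Fin n)) t) := by
        rw [← e.hausdorffMeasure_image, e.image_closedBall, ENNReal.rpow_natCast]
        simp [e]
    _ = _ := by
        have h : (n : ℝ) = finrank ℝ (EuclideanSpace ℝ (Fin n)) := by simp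
        rw [mul_assoc, h, Measure.addHaar_closedBall _ _ ht0, ← h]
        simp

lemma hausdorffMeasure_sphere_lt_top : μH[n] (sphere (0 : E) 1) < ∞ := by
  have : FiniteDimensional ℝ E := .of_fact_finrank_eq_succ n
  obtain ⟨s, hsS, hs, hcover⟩ :=
    finite_cover_balls_of_compact (isCompact_sphere (0 : E) 1) (by norm_num : (0 : ℝ) < 3 / 4)
  have hsub : sphere (0 : E) 1 ⊆ ⋃ p ∈ s, sphere (0 : E) 1 ∩ closedBall p (3 / 4) :=
    fun ω hω => by
      obtain ⟨p, hp, hωp⟩ := mem_iUnion₂.mp (hcover hω)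
      exact mem_iUnion₂.mpr ⟨p, hp, hω, ball_subset_closedBall hωp⟩
  refine (measure_mono hsub).trans_lt (measure_biUnion_lt_top hs fun p hp => ?_)
  refine (hausdorffMeasure_sphere_inter_closedBall_le (mem_sphere_zero_iff_norm.mp (hsS hp))
    (by norm_num) le_rfl).trans_lt ?_
  exact ENNReal.mul_lt_top (by finiteness) (hausdorffMeasure_ball_euclideanSpace_lt_top n)

lemma exists_hausdorffMeasure_sphere_inter_closedBall_le :
    ∃ A : ℝ≥0, ∀ p : E, ‖p‖ = 1 → ∀ t, 0 ≤ t →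
      μH[n] (sphere (0 : E) 1 ∩ closedBall p t) ≤ A * ENNReal.ofReal (t ^ n) := by
  set c := μH[n] (ball (0 : EuclideanSpace ℝ (Fin n)) 1)
  set m := μH[n] (sphere (0 : E) 1)
  have hc : c < ∞ := hausdorffMeasure_ball_euclideanSpace_lt_top n
  have hm : m < ∞ := hausdorffMeasure_sphere_lt_top
  refine ⟨(3 ^ n * c + ENNReal.ofReal ((4 / 3) ^ n) * m).toNNReal, fun p hp t ht0 => ?_⟩
  rw [ENNReal.coe_toNNReal (by finiteness)]
  rcases le_or_gt t (3 / 4) with ht | ht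
  · calc μH[n] (sphere (0 : E) 1 ∩ closedBall p t)
        ≤ 3 ^ n * ENNReal.ofReal (t ^ n) * c :=
          hausdorffMeasure_sphere_inter_closedBall_le hp ht0 ht
      _ ≤ _ := by rw [mul_right_comm]; gcongr; exact le_self_add
  · calc μH[n] (sphere (0 : E) 1 ∩ closedBall p t)
        ≤ ENNReal.ofReal ((4 / 3 * t) ^ n) * m := by
          refine (measure_mono inter_subset_left).trans (le_mul_of_one_le_left' ?_)
          exact ENNReal.one_le_ofReal.mpr (one_le_pow₀ (by linarith))
      _ ≤ _ := by
          rw [mul_pow, ENNReal.ofReal_mul (by positivity), mul_right_comm]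
          gcongr
          exact le_add_self

lemma exists_lintegral_sphere_exp_neg_mul_dist_sq_le :
    ∃ B : ℝ≥0, ∀ p : E, ‖p‖ = 1 → ∀ s : ℝ, 0 < s →
      ∫⁻ ω in sphere (0 : E) 1, ENNReal.ofReal (exp (-(s * dist ω p ^ 2 / 2))) ∂μH[n]
        ≤ B * ENNReal.ofReal (s ^ (-(n : ℝ) / 2)) := by
  obtain ⟨A, hA⟩ := exists_hausdorffMeasure_sphere_inter_closedBall_le (E := E) (n := n)
  set w : ℕ → ℝ := fun k => ((k : ℝ) + 1) ^ n * exp (-(k / 2))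
  have hw : ∀ k, 0 ≤ w k := fun k => by positivity
  refine ⟨A * (∑' k, w k).toNNReal, fun p hp s hs => ?_⟩
  set u := √s
  have hu : 0 < u := sqrt_pos.mpr hs
  have hpointwise : ∀ ω, ENNReal.ofReal (exp (-(s * dist ω p ^ 2 / 2))) ≤
      ∑' k : ℕ, (closedBall p ((k + 1) / u)).indicator
        (fun _ => ENNReal.ofReal (exp (-(k / 2)))) ω := by
    intro ω
    set k := ⌊u * dist ω p⌋₊
    have hk : (k : ℝ) ≤ u * dist ω p := Nat.floor_le (by positivity)
    have hk' : u * dist ω p < k + 1 := Nat.lt_floor_add_one _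
    have hk_sq : (k : ℝ) ≤ k ^ 2 := by exact_mod_cast Nat.le_self_pow two_ne_zero k
    have hs_dist : s * dist ω p ^ 2 = (u * dist ω p) ^ 2 := by rw [mul_pow, sq_sqrt hs.le]
    refine le_trans ?_ (ENNReal.le_tsum k)
    rw [indicator_of_mem (mem_closedBall.mpr ((le_div_iff₀' hu).mpr hk'.le))]
    gcongr
    nlinarith [pow_le_pow_left₀ (Nat.cast_nonneg k) hk 2]
  have hmeas : ∀ k : ℕ, AEMeasurable ((closedBall p ((k + 1) / u)).indicator
      (fun _ => ENNReal.ofReal (exp (-(k / 2))))) (μH[n].restrict (sphere (0 : E) 1)) :=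
    fun k => (measurable_const.indicator measurableSet_closedBall).aemeasurable
  have hpow : u⁻¹ ^ n = s ^ (-(n : ℝ) / 2) := by
    rw [show u = √s from rfl, sqrt_eq_rpow, ← rpow_neg hs.le, ← rpow_natCast, ← rpow_mul hs.le]
    ring_nf
  calc ∫⁻ ω in sphere (0 : E) 1, ENNReal.ofReal (exp (-(s * dist ω p ^ 2 / 2))) ∂μH[n]
      ≤ ∫⁻ ω in sphere (0 : E) 1, ∑' k : ℕ,
          (closedBall p ((k + 1) / u)).indicator (fun _ => ENNReal.ofReal (exp (-(k / 2)))) ω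
          ∂μH[n] := lintegral_mono hpointwise
    _ = ∑' k : ℕ, ENNReal.ofReal (exp (-(k / 2))) *
          μH[n] (sphere (0 : E) 1 ∩ closedBall p ((k + 1) / u)) := by
        simp only [lintegral_tsum hmeas, lintegral_indicator_const measurableSet_closedBall,
          Measure.restrict_apply measurableSet_closedBall, inter_comm]
    _ ≤ ∑' k : ℕ, ENNReal.ofReal (exp (-(k / 2))) * (A * ENNReal.ofReal (((k + 1) / u) ^ n)) :=
        ENNReal.tsum_le_tsum fun k => by gcongr; exact hA p hp _ (by positivity)
    _ = A * ENNReal.ofReal (u⁻¹ ^ n) * ∑' k, ENNReal.ofReal (w k) := by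
        rw [← ENNReal.tsum_mul_left]
        refine tsum_congr fun k => ?_
        rw [mul_left_comm, ← ENNReal.ofReal_mul (by positivity), mul_assoc,
          ← ENNReal.ofReal_mul (by positivity)]
        congr 2
        simp only [w, div_eq_mul_inv (_ + 1 : ℝ), mul_pow, inv_pow]
        ring
    _ = _ := by
        rw [← ENNReal.ofReal_tsum_of_nonneg hw (summable_succ_pow_mul_exp_neg_half n), hpow,
          mul_right_comm]
        rfl

theorem exists_integral_sphere_exp_inner_le :
    ∃ C > (0 : ℝ), ∀ x : E, ∫ ω in sphere (0 : E) 1, exp (inner ℝ x ω) ∂μH[n]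
      ≤ C * exp ‖x‖ * (1 + ‖x‖) ^ (-(n : ℝ) / 2) := by
  have : Nontrivial E := Module.nontrivial_of_finrank_eq_succ (Fact.out : finrank ℝ E = n + 1)
  obtain ⟨B, hB⟩ := exists_lintegral_sphere_exp_neg_mul_dist_sq_le (E := E) (n := n)
  refine ⟨exp 2 * (B + 1), by positivity, fun x => ?_⟩
  obtain ⟨p, hp, hx⟩ := exists_norm_eq_one_and_eq_norm_smul x
  set r := ‖x‖
  set y := (1 + r) ^ (-(n : ℝ) / 2)
  have hpointwise : ∀ ω ∈ sphere (0 : E) 1, ENNReal.ofReal (exp (inner ℝ x ω)) ≤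
      ENNReal.ofReal (exp (r + 2)) * ENNReal.ofReal (exp (-((1 + r) * dist ω p ^ 2 / 2))) :=
    fun ω hω => by
      rw [← ENNReal.ofReal_mul (exp_pos _).le, ← exp_add]
      gcongr
      have := inner_smul_le_of_norm_eq_one hp (mem_sphere_zero_iff_norm.mp hω) ‖x‖
      rw [← hx] at this
      linarith
  have hlintegral : ∫⁻ ω in sphere (0 : E) 1, ENNReal.ofReal (exp (inner ℝ x ω)) ∂μH[n] ≤
      ENNReal.ofReal (exp 2 * B * exp r * y) :=
    calc _ ≤ ∫⁻ ω in sphere (0 : E) 1, ENNReal.ofReal (exp (r + 2)) *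
            ENNReal.ofReal (exp (-((1 + r) * dist ω p ^ 2 / 2))) ∂μH[n] :=
          setLIntegral_mono (by fun_prop) hpointwise
      _ = ENNReal.ofReal (exp (r + 2)) * ∫⁻ ω in sphere (0 : E) 1,
            ENNReal.ofReal (exp (-((1 + r) * dist ω p ^ 2 / 2))) ∂μH[n] :=
          lintegral_const_mul' _ _ ENNReal.ofReal_ne_top
      _ ≤ ENNReal.ofReal (exp (r + 2)) * (B * ENNReal.ofReal y) := by
          gcongr
          exact hB p hp _ (by positivity)
      _ = _ := by
          rw [← ENNReal.ofReal_coe_nnreal, ← ENNReal.ofReal_mul (by positivity),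
            ← ENNReal.ofReal_mul (by positivity), exp_add]
          ring_nf
  rw [integral_eq_lintegral_of_nonneg_ae (ae_of_all _ fun ω => (exp_pos _).le)
    (by fun_prop : Continuous fun ω : E => exp (inner ℝ x ω)).aestronglyMeasurable]
  calc _ ≤ exp 2 * B * exp r * y := ENNReal.toReal_le_of_le_ofReal (by positivity) hlintegral
    _ ≤ exp 2 * (B + 1) * exp r * y := by gcongr; linarith

end HausdorffSphere

theorem stmt_10 (N : ℕ) (hN : 2 ≤ N)
    (φ : EuclideanSpace ℝ (Fin N) → ℝ)
    (hφ : ∀ x, φ x = ∫ ω in Metric.sphere (0 : EuclideanSpace ℝ (Fin N)) 1,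
        Real.exp (inner ℝ x ω) ∂(μH[(N : ℝ) - 1])) :
    ∃ C > (0:ℝ), ∀ x, φ x ≤ C * Real.exp ‖x‖ * (1 + ‖x‖) ^ (-((N : ℝ) - 1) / 2) := by
  obtain ⟨n, rfl⟩ : ∃ n, N = n + 1 := ⟨N - 1, by omega⟩
  have : Fact (finrank ℝ (EuclideanSpace ℝ (Fin (n + 1))) = n + 1) := ⟨finrank_euclideanSpace_fin⟩
  have hdim : ((n + 1 : ℕ) : ℝ) - 1 = n := by push_cast; ring
  obtain ⟨C, hC, hbound⟩ :=
    exists_integral_sphere_exp_inner_le (E := EuclideanSpace ℝ (Fin (n + 1))) (n := n)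
  exact ⟨C, hC, fun x => by rw [hφ, hdim]; exact hbound x⟩
end

section
/- Let N ≥ 2, p > 1 and p' = p/(p-1), and let φ(x) = ∫_{S^{N-1}} e^{x·ω} dS(ω). Then there exists C > 0 such that for every ρ ≥ 1, ∫_{B(0,ρ)} φ(x)^{p'} dx ≤ C (1+ρ)^{N-1-((N-1)/2)p'} e^{p' ρ}. -/
open MeasureTheory Real Set
open scoped RealInnerProductSpace ENNReal

lemma aux_poly_exp (q δ : ℝ) (hq : 0 ≤ q) (hδ : 0 < δ) :
    ∃ M > 0, ∀ r : ℝ, 0 ≤ r → (1 + r) ^ q * Real.exp (-(δ * r)) ≤ M := by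
  obtain ⟨n, hn⟩ : ∃ n : ℕ, q ≤ n := exists_nat_ge q
  refine ⟨n.factorial / δ ^ n * Real.exp δ, by positivity, fun r hr => ?_⟩
  have h1r : (1:ℝ) ≤ 1 + r := by linarith
  have h1 : (1 + r) ^ q ≤ (1 + r) ^ (n : ℕ) := by
    rw [← Real.rpow_natCast (1+r) n]
    exact Real.rpow_le_rpow_of_exponent_le h1r hn
  have h2 : (δ * (1 + r)) ^ n / n.factorial ≤ Real.exp (δ * (1 + r)) := by
    calc (δ * (1 + r)) ^ n / n.factorial
        ≤ ∑ i ∈ Finset.range (n+1), (δ * (1+r)) ^ i / i.factorial :=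
          Finset.single_le_sum (f := fun i => (δ*(1+r))^i / (i.factorial:ℝ))
            (fun i _ => by positivity) (Finset.self_mem_range_succ n)
      _ ≤ Real.exp (δ * (1 + r)) := Real.sum_le_exp_of_nonneg (by positivity) _
  have h3 : (1 + r) ^ n ≤ n.factorial / δ ^ n * Real.exp (δ * (1 + r)) := by
    rw [mul_pow] at h2
    rw [div_le_iff₀ (by positivity : (0:ℝ) < (n.factorial:ℝ))] at h2
    rw [div_mul_eq_mul_div, le_div_iff₀ (by positivity : (0:ℝ) < δ ^ n)]
    calc (1+r)^n * δ ^ n = δ ^ n * (1+r)^n := by ring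
      _ ≤ Real.exp (δ * (1+r)) * n.factorial := h2
      _ = (n.factorial : ℝ) * Real.exp (δ * (1+r)) := by ring
  calc (1+r)^q * Real.exp (-(δ*r))
      ≤ ((n.factorial:ℝ) / δ^n * Real.exp (δ*(1+r))) * Real.exp (-(δ*r)) := by
        have := h1.trans h3
        gcongr
      _ = (n.factorial:ℝ) / δ^n * Real.exp δ := by
        rw [mul_assoc, ← Real.exp_add]; ring_nf

lemma aux_oneD (α c : ℝ) (hc : 1 ≤ c) :
    ∃ C > 0, ∀ ρ : ℝ, 1 ≤ ρ →
      (∫ y in Ioo (0:ℝ) ρ, (1 + y) ^ α * Real.exp (c * y))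
        ≤ C * ((1 + ρ) ^ α * Real.exp (c * ρ)) := by
  obtain ⟨M, hM, hMb⟩ := aux_poly_exp (|α| + 1) (1/2) (by positivity) (by norm_num)
  refine ⟨M + 2 ^ |α| / c, by positivity, fun ρ hρ => ?_⟩
  have hρ0 : (0:ℝ) < ρ := by linarith
  have hρ2 : (0:ℝ) < ρ/2 := by linarith
  have h1ρ : (0:ℝ) < 1 + ρ := by linarith
  have hc0 : (0:ℝ) < c := by linarith
  have hcont : ContinuousOn (fun y : ℝ => (1 + y) ^ α * Real.exp (c * y)) (Ici 0) := by
    apply ContinuousOn.mul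
    · apply ContinuousOn.rpow_const (by fun_prop)
      intro y hy
      simp only [mem_Ici] at hy
      left; positivity
    · fun_prop
  have hint : ∀ a b : ℝ, 0 ≤ a → IntegrableOn (fun y : ℝ => (1 + y) ^ α * Real.exp (c * y)) (Icc a b) := by
    intro a b ha
    apply ContinuousOn.integrableOn_Icc
    exact hcont.mono (fun y hy => le_trans ha hy.1)
  have hint1 : IntegrableOn (fun y : ℝ => (1 + y) ^ α * Real.exp (c * y)) (Ioc 0 (ρ/2)) :=
    (hint 0 (ρ/2) le_rfl).mono_set Ioc_subset_Icc_self
  have hint2 : IntegrableOn (fun y : ℝ => (1 + y) ^ α * Real.exp (c * y)) (Ioo (ρ/2) ρ) :=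
    (hint (ρ/2) ρ hρ2.le).mono_set Ioo_subset_Icc_self
  have hsplit : Ioo (0:ℝ) ρ = Ioc 0 (ρ/2) ∪ Ioo (ρ/2) ρ :=
    (Ioc_union_Ioo_eq_Ioo (by linarith) (by linarith)).symm
  rw [hsplit, setIntegral_union (by rw [Set.disjoint_left]; rintro x ⟨_, h1⟩ ⟨h2, _⟩; linarith)
    measurableSet_Ioo hint1 hint2]
  have hpowα : (0:ℝ) ≤ (1+ρ)^α := Real.rpow_nonneg h1ρ.le α
  -- piece 1
  have hP1 : (∫ y in Ioc (0:ℝ) (ρ/2), (1 + y) ^ α * Real.exp (c * y))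
      ≤ M * ((1 + ρ) ^ α * Real.exp (c * ρ)) := by
    have hb : ∀ y ∈ Ioc (0:ℝ) (ρ/2), (1 + y) ^ α * Real.exp (c * y)
        ≤ (1 + ρ) ^ (α + |α|) * Real.exp (c * (ρ/2)) := by
      intro y hy
      obtain ⟨hy1, hy2⟩ := hy
      have h1y : (0:ℝ) < 1 + y := by linarith
      have hexp : Real.exp (c * y) ≤ Real.exp (c * (ρ/2)) :=
        Real.exp_le_exp.mpr (mul_le_mul_of_nonneg_left hy2 hc0.le)
      apply mul_le_mul _ hexp (Real.exp_nonneg _) (Real.rpow_nonneg h1ρ.le _)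
      rcases le_or_gt 0 α with hα | hα
      · calc (1+y)^α ≤ (1+ρ)^α := Real.rpow_le_rpow h1y.le (by linarith) hα
          _ ≤ (1+ρ)^(α+|α|) := Real.rpow_le_rpow_of_exponent_le (by linarith)
              (by simp [abs_of_nonneg hα]; linarith)
      · calc (1+y)^α ≤ 1 := Real.rpow_le_one_of_one_le_of_nonpos (by linarith) hα.le
          _ = (1+ρ)^(α + |α|) := by rw [abs_of_neg hα, add_neg_cancel, Real.rpow_zero]
    calc (∫ y in Ioc (0:ℝ) (ρ/2), (1 + y) ^ α * Real.exp (c * y))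
        ≤ ∫ _ in Ioc (0:ℝ) (ρ/2), (1 + ρ) ^ (α + |α|) * Real.exp (c * (ρ/2)) :=
          setIntegral_mono_on hint1 (integrableOn_const measure_Ioc_lt_top.ne)
            measurableSet_Ioc hb
      _ = (ρ/2) * ((1 + ρ) ^ (α + |α|) * Real.exp (c * (ρ/2))) := by
          rw [setIntegral_const, measureReal_def, Real.volume_Ioc, smul_eq_mul, ENNReal.toReal_ofReal (by linarith)]
          ring_nf
      _ ≤ M * ((1 + ρ) ^ α * Real.exp (c * ρ)) := by
          rw [Real.rpow_add h1ρ]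
          have eexp : Real.exp (c * (ρ/2)) ≤ Real.exp (c * ρ) * Real.exp (-(1/2 * ρ)) := by
            rw [← Real.exp_add]
            apply Real.exp_le_exp.mpr
            nlinarith
          have habs : (0:ℝ) ≤ (1+ρ)^|α| := Real.rpow_nonneg h1ρ.le _
          have key : (ρ/2) * ((1+ρ)^|α| * Real.exp (c * (ρ/2))) ≤ M * Real.exp (c * ρ) := by
            calc (ρ/2) * ((1+ρ)^|α| * Real.exp (c * (ρ/2)))
                ≤ (1+ρ) * ((1+ρ)^|α| * (Real.exp (c * ρ) * Real.exp (-(1/2 * ρ)))) := by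
                  apply mul_le_mul (by linarith) _ (by positivity) (by linarith)
                  exact mul_le_mul_of_nonneg_left eexp habs
              _ = ((1+ρ)^(|α|+1) * Real.exp (-(1/2 * ρ))) * Real.exp (c * ρ) := by
                  rw [Real.rpow_add h1ρ, Real.rpow_one]; ring
              _ ≤ M * Real.exp (c * ρ) := by
                  apply mul_le_mul_of_nonneg_right (hMb ρ hρ0.le) (Real.exp_nonneg _)
          calc (ρ/2) * ((1 + ρ) ^ α * (1+ρ)^|α| * Real.exp (c * (ρ/2)))
              = (1+ρ)^α * ((ρ/2) * ((1+ρ)^|α| * Real.exp (c * (ρ/2)))) := by ring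
            _ ≤ (1+ρ)^α * (M * Real.exp (c * ρ)) := mul_le_mul_of_nonneg_left key hpowα
            _ = M * ((1 + ρ) ^ α * Real.exp (c * ρ)) := by ring
  -- piece 2
  have hP2 : (∫ y in Ioo (ρ/2) ρ, (1 + y) ^ α * Real.exp (c * y))
      ≤ (2 ^ |α| / c) * ((1 + ρ) ^ α * Real.exp (c * ρ)) := by
    have hb2 : ∀ y ∈ Ioo (ρ/2) ρ, (1+y)^α * Real.exp (c*y)
        ≤ (2^|α| * (1+ρ)^α) * Real.exp (c*y) := by
      intro y hy
      obtain ⟨hy1, hy2⟩ := hy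
      have h1y : (0:ℝ) < 1 + y := by linarith
      apply mul_le_mul_of_nonneg_right _ (Real.exp_nonneg _)
      rcases le_or_gt 0 α with hα | hα
      · have h1 : (1+y)^α ≤ (1+ρ)^α := Real.rpow_le_rpow h1y.le (by linarith) hα
        have h2 : (1:ℝ) ≤ 2^|α| := Real.one_le_rpow (by norm_num) (abs_nonneg α)
        nlinarith
      · have hmid : (0:ℝ) < (1+ρ)/2 := by linarith
        calc (1+y)^α ≤ ((1+ρ)/2)^α :=
              Real.rpow_le_rpow_of_nonpos hmid (by linarith) hα.le
          _ = (1+ρ)^α / 2^α := Real.div_rpow h1ρ.le (by norm_num) α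
          _ = 2^|α| * (1+ρ)^α := by
              rw [abs_of_neg hα, Real.rpow_neg (by norm_num : (0:ℝ) ≤ 2)]
              field_simp
    have hintg : IntegrableOn (fun y : ℝ => (2^|α| * (1+ρ)^α) * Real.exp (c*y)) (Ioo (ρ/2) ρ) :=
      ((by fun_prop : Continuous fun y : ℝ => (2^|α| * (1+ρ)^α) * Real.exp (c*y)).integrableOn_Icc).mono_set
        Ioo_subset_Icc_self
    calc (∫ y in Ioo (ρ/2) ρ, (1 + y) ^ α * Real.exp (c * y))
        ≤ ∫ y in Ioo (ρ/2) ρ, (2^|α| * (1+ρ)^α) * Real.exp (c*y) :=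
          setIntegral_mono_on hint2 hintg measurableSet_Ioo hb2
      _ = (2^|α| * (1+ρ)^α) * ∫ y in Ioo (ρ/2) ρ, Real.exp (c*y) := by
          rw [integral_const_mul]
      _ ≤ (2^|α| * (1+ρ)^α) * (Real.exp (c*ρ) / c) := by
          apply mul_le_mul_of_nonneg_left _ (by positivity)
          have : (∫ y in Ioo (ρ/2) ρ, Real.exp (c*y)) = c⁻¹ * (Real.exp (c*ρ) - Real.exp (c*(ρ/2))) := by
            rw [← integral_Ioc_eq_integral_Ioo, ← intervalIntegral.integral_of_le (by linarith : ρ/2 ≤ ρ),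
              intervalIntegral.integral_comp_mul_left (fun u => Real.exp u) hc0.ne',
              integral_exp, smul_eq_mul]
          rw [this, div_eq_inv_mul (Real.exp (c*ρ)) c]
          have h5 : Real.exp (c * ρ) - Real.exp (c * (ρ/2)) ≤ Real.exp (c * ρ) := by
            linarith [Real.exp_pos (c*(ρ/2))]
          exact mul_le_mul_of_nonneg_left h5 (by positivity : (0:ℝ) ≤ c⁻¹)
      _ = (2 ^ |α| / c) * ((1 + ρ) ^ α * Real.exp (c * ρ)) := by ring
  calc (∫ y in Ioc (0:ℝ) (ρ/2), (1 + y) ^ α * Real.exp (c * y))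
        + ∫ y in Ioo (ρ/2) ρ, (1 + y) ^ α * Real.exp (c * y)
      ≤ M * ((1 + ρ) ^ α * Real.exp (c * ρ)) + (2 ^ |α| / c) * ((1 + ρ) ^ α * Real.exp (c * ρ)) :=
        add_le_add hP1 hP2
    _ = (M + 2 ^ |α| / c) * ((1 + ρ) ^ α * Real.exp (c * ρ)) := by ring

set_option maxHeartbeats 1600000 in
lemma aux_cap (N : ℕ) (hN : 2 ≤ N) (u : EuclideanSpace ℝ (Fin N)) (hu : ‖u‖ = 1)
    (c : ℝ) (hc0 : 0 < c) (hc1 : c ≤ 1) :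
    μH[(N : ℝ) - 1] {ω : EuclideanSpace ℝ (Fin N) | ‖ω‖ = 1 ∧ c ≤ ⟪u, ω⟫}
      ≤ ENNReal.ofReal ((4 * Real.sqrt ((N:ℝ)-1) / c) ^ ((N:ℝ)-1)
          * (1 - c) ^ (((N:ℝ)-1)/2)) := by
  set d : ℝ := (N:ℝ) - 1 with hd_def
  have hN1 : (1:ℝ) ≤ d := by
    have : (2:ℝ) ≤ (N:ℝ) := by exact_mod_cast hN
    simp only [hd_def]; linarith
  have hd0 : (0:ℝ) ≤ d := by linarith
  have hdcast : ((N - 1 : ℕ) : ℝ) = d := by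
    rw [Nat.cast_sub (by omega)]; norm_num [hd_def]
  set ρc : ℝ := Real.sqrt (1 - c^2) with hρc_def
  have hρc0 : (0:ℝ) ≤ ρc := Real.sqrt_nonneg _
  have h1c2 : (0:ℝ) ≤ 1 - c^2 := by nlinarith
  have hρc2 : ρc^2 = 1 - c^2 := Real.sq_sqrt h1c2
  have hρc1 : ρc ≤ 1 := by nlinarith [hρc2, hρc0]
  have hu0 : u ≠ 0 := by intro h; rw [h, norm_zero] at hu; norm_num at hu
  haveI : Fact (Module.finrank ℝ (EuclideanSpace ℝ (Fin N)) = (N-1) + 1) :=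
    ⟨by rw [finrank_euclideanSpace_fin]; omega⟩
  set b := OrthonormalBasis.fromOrthogonalSpanSingleton (𝕜 := ℝ) (N-1) hu0 with hb
  set F : EuclideanSpace ℝ (Fin N) → EuclideanSpace ℝ (Fin N) :=
    fun y => y + Real.sqrt (1 - ‖y‖^2) • u with hF
  set G : (Fin (N-1) → ℝ) → EuclideanSpace ℝ (Fin N) :=
    fun v => (b.repr.symm ((WithLp.equiv 2 (Fin (N-1) → ℝ)).symm v) :
      EuclideanSpace ℝ (Fin N)) with hG
  set D : Set (EuclideanSpace ℝ (Fin N)) := {y | ⟪u, y⟫ = 0 ∧ ‖y‖ ≤ ρc} with hD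
  set cube : Set (Fin (N-1) → ℝ) := Set.univ.pi (fun _ => Icc (-ρc) ρc) with hcube
  -- Claim 1 : cap ⊆ F '' D
  have hsub1 : {ω : EuclideanSpace ℝ (Fin N) | ‖ω‖ = 1 ∧ c ≤ ⟪u, ω⟫} ⊆ F '' D := by
    rintro ω ⟨hω1, hωc⟩
    have ha1 : ⟪u, ω⟫ ≤ 1 := by
      have := real_inner_le_norm u ω
      rw [hu, hω1] at this; linarith
    have ha0 : (0:ℝ) ≤ ⟪u, ω⟫ := le_trans hc0.le hωc
    set a := ⟪u, ω⟫ with hadef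
    have hinner : ⟪ω, a • u⟫ = a * a := by
      rw [real_inner_smul_right, real_inner_comm, ← hadef]
    have hnormau : ‖a • u‖^2 = a^2 := by
      rw [norm_smul, hu, mul_one, Real.norm_eq_abs, sq_abs]
    have hnorm : ‖ω - a•u‖^2 = 1 - a^2 := by
      rw [norm_sub_sq_real, hinner, hnormau, hω1]
      ring
    refine ⟨ω - a • u, ⟨?_, ?_⟩, ?_⟩
    · rw [inner_sub_right, real_inner_smul_right, real_inner_self_eq_norm_sq, hu]
      ring
    · have : ‖ω - a•u‖ = Real.sqrt (1 - a^2) := by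
        rw [← hnorm, Real.sqrt_sq (norm_nonneg _)]
      rw [this, hρc_def]
      exact Real.sqrt_le_sqrt (by nlinarith)
    · show (ω - a•u) + Real.sqrt (1 - ‖ω - a•u‖^2) • u = ω
      have h2 : 1 - ‖ω - a•u‖^2 = a^2 := by rw [hnorm]; ring
      rw [h2, Real.sqrt_sq ha0]
      abel
  -- Claim 2 : F is (1/c)-Lipschitz on D
  have hlip1 : LipschitzOnWith (Real.toNNReal (1/c)) F D := by
    rw [lipschitzOnWith_iff_dist_le_mul]
    intro y hy z hz
    obtain ⟨hyo, hyn⟩ := hy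
    obtain ⟨hzo, hzn⟩ := hz
    have h1y : (0:ℝ) ≤ 1 - ‖y‖^2 := by nlinarith [norm_nonneg y]
    have h1z : (0:ℝ) ≤ 1 - ‖z‖^2 := by nlinarith [norm_nonneg z]
    set sy := Real.sqrt (1 - ‖y‖^2) with hsy
    set sz := Real.sqrt (1 - ‖z‖^2) with hsz
    have hsy2 : sy^2 = 1 - ‖y‖^2 := Real.sq_sqrt h1y
    have hsz2 : sz^2 = 1 - ‖z‖^2 := Real.sq_sqrt h1z
    have hsyc : c ≤ sy := by
      rw [hsy]
      calc c = Real.sqrt (c^2) := (Real.sqrt_sq hc0.le).symm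
        _ ≤ Real.sqrt (1 - ‖y‖^2) := Real.sqrt_le_sqrt (by nlinarith [norm_nonneg y])
    have hszc : c ≤ sz := by
      rw [hsz]
      calc c = Real.sqrt (c^2) := (Real.sqrt_sq hc0.le).symm
        _ ≤ Real.sqrt (1 - ‖z‖^2) := Real.sqrt_le_sqrt (by nlinarith [norm_nonneg z])
    -- |sy - sz| ≤ (ρc/c) ‖y - z‖
    have hkey : |sy - sz| ≤ ρc / c * ‖y - z‖ := by
      have h1 : |sy - sz| * (2*c) ≤ |sy - sz| * (sy + sz) := by
        apply mul_le_mul_of_nonneg_left (by linarith) (abs_nonneg _)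
      have h2 : |sy - sz| * (sy + sz) = |‖z‖^2 - ‖y‖^2| := by
        rw [← abs_of_nonneg (by linarith : (0:ℝ) ≤ sy + sz), ← abs_mul]
        congr 1
        nlinarith [hsy2, hsz2]
      have h3 : |‖z‖^2 - ‖y‖^2| = |‖z‖ - ‖y‖| * (‖z‖ + ‖y‖) := by
        rw [← abs_of_nonneg (by positivity : (0:ℝ) ≤ ‖z‖ + ‖y‖), ← abs_mul]
        congr 1; ring
      have h4 : |‖z‖ - ‖y‖| ≤ ‖y - z‖ := by
        rw [norm_sub_rev]
        exact abs_norm_sub_norm_le z y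
      have h5 : |‖z‖^2 - ‖y‖^2| ≤ ‖y - z‖ * (2*ρc) := by
        rw [h3]
        apply mul_le_mul h4 (by linarith) (by positivity) (norm_nonneg _)
      have h6 : |sy - sz| * (2*c) ≤ ‖y - z‖ * (2*ρc) := by
        calc |sy - sz| * (2*c) ≤ |sy - sz| * (sy + sz) := h1
          _ = |‖z‖^2 - ‖y‖^2| := h2
          _ ≤ ‖y - z‖ * (2*ρc) := h5
      rw [div_mul_eq_mul_div, le_div_iff₀ hc0]
      nlinarith
    have hFyz : F y - F z = (y - z) + (sy - sz) • u := by
      simp only [hF, hsy, hsz, sub_smul]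
      abel
    have hortho : ⟪y - z, u⟫ = 0 := by
      have h1 : ⟪y, u⟫ = 0 := by rw [real_inner_comm]; exact hyo
      have h2 : ⟪z, u⟫ = 0 := by rw [real_inner_comm]; exact hzo
      rw [inner_sub_left, h1, h2, sub_zero]
    have hnormsq : ‖F y - F z‖^2 = ‖y - z‖^2 + (sy - sz)^2 := by
      rw [hFyz, norm_add_sq_real, real_inner_smul_right, hortho, norm_smul, hu]
      simp [Real.norm_eq_abs, sq_abs]
    have hfinal : ‖F y - F z‖^2 ≤ (1/c * ‖y - z‖)^2 := by
      rw [hnormsq]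
      have h7 : (sy - sz)^2 ≤ (ρc/c * ‖y-z‖)^2 := by
        rw [← sq_abs (sy - sz)]
        apply pow_le_pow_left₀ (abs_nonneg _) hkey
      have h8 : (ρc/c * ‖y-z‖)^2 = ρc^2/c^2 * ‖y-z‖^2 := by ring
      have h9 : (1/c * ‖y-z‖)^2 = 1/c^2 * ‖y-z‖^2 := by ring
      rw [h8] at h7
      rw [h9]
      have : ρc^2/c^2 * ‖y-z‖^2 + ‖y-z‖^2 * (c^2/c^2) = 1/c^2 * ‖y-z‖^2 := by
        rw [hρc2]
        field_simp
        ring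
      nlinarith [sq_nonneg ‖y - z‖, div_self (by positivity : (c:ℝ)^2 ≠ 0)]
    rw [dist_eq_norm, dist_eq_norm, Real.coe_toNNReal _ (by positivity : (0:ℝ) ≤ 1/c)]
    calc ‖F y - F z‖ = Real.sqrt (‖F y - F z‖^2) := (Real.sqrt_sq (norm_nonneg _)).symm
      _ ≤ Real.sqrt ((1/c * ‖y - z‖)^2) := Real.sqrt_le_sqrt hfinal
      _ = 1/c * ‖y - z‖ := Real.sqrt_sq (by positivity)
  -- Claim 3 : D ⊆ G '' cube
  have hsub2 : D ⊆ G '' cube := by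
    rintro y ⟨hy0, hyn⟩
    have hyK : y ∈ (Submodule.span ℝ {u})ᗮ :=
      (Submodule.mem_orthogonal_singleton_iff_inner_right).mpr hy0
    refine ⟨WithLp.equiv 2 (Fin (N-1) → ℝ) (b.repr ⟨y, hyK⟩), ?_, ?_⟩
    · intro i _
      have hcoef : b.repr ⟨y, hyK⟩ i = ⟪(b i : EuclideanSpace ℝ (Fin N)), y⟫ := by
        rw [b.repr_apply_apply, Submodule.coe_inner]
      have habs : |b.repr ⟨y, hyK⟩ i| ≤ ρc := by
        rw [hcoef]
        calc |⟪(b i : EuclideanSpace ℝ (Fin N)), y⟫| ≤ ‖(b i : EuclideanSpace ℝ (Fin N))‖ * ‖y‖ :=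
            abs_real_inner_le_norm _ _
          _ ≤ 1 * ρc := by
            apply mul_le_mul _ hyn (norm_nonneg _) zero_le_one
            have hb1 : ‖(b i : EuclideanSpace ℝ (Fin N))‖ = 1 := by
              rw [Submodule.norm_coe]
              exact b.orthonormal.1 i
            rw [hb1]
          _ = ρc := one_mul _
      have := abs_le.mp habs
      exact ⟨this.1, this.2⟩
    · show (b.repr.symm ((WithLp.equiv 2 (Fin (N-1) → ℝ)).symm
        (WithLp.equiv 2 (Fin (N-1) → ℝ) (b.repr ⟨y, hyK⟩))) : EuclideanSpace ℝ (Fin N)) = y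
      rw [Equiv.symm_apply_apply, LinearIsometryEquiv.symm_apply_apply]
  -- Claim 4 : G is √d-Lipschitz
  have hlip2 : LipschitzWith (Real.toNNReal (Real.sqrt d)) G := by
    apply LipschitzWith.of_dist_le_mul
    intro v w
    rw [dist_eq_norm, dist_eq_norm, Real.coe_toNNReal _ (Real.sqrt_nonneg d)]
    have hGlin : G v - G w = (b.repr.symm ((WithLp.equiv 2 (Fin (N-1) → ℝ)).symm (v - w)) :
        EuclideanSpace ℝ (Fin N)) := by
      simp only [hG]
      rw [← Submodule.coe_sub]
      congr 1
      rw [← map_sub]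
      congr 1
    rw [hGlin]
    have hnorm1 : ‖(b.repr.symm ((WithLp.equiv 2 (Fin (N-1) → ℝ)).symm (v - w)) :
        EuclideanSpace ℝ (Fin N))‖ = ‖(WithLp.equiv 2 (Fin (N-1) → ℝ)).symm (v - w)‖ := by
      rw [Submodule.norm_coe, LinearIsometryEquiv.norm_map]
    rw [hnorm1]
    have hnorm2 : ‖(WithLp.equiv 2 (Fin (N-1) → ℝ)).symm (v - w)‖
        ≤ Real.sqrt d * ‖v - w‖ := by
      rw [EuclideanSpace.norm_eq]
      have hsum : (∑ i, ‖((WithLp.equiv 2 (Fin (N-1) → ℝ)).symm (v - w)) i‖^2)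
          ≤ (N - 1 : ℕ) * ‖v - w‖^2 := by
        calc (∑ i, ‖((WithLp.equiv 2 (Fin (N-1) → ℝ)).symm (v - w)) i‖^2)
            ≤ ∑ _i : Fin (N-1), ‖v - w‖^2 := by
              apply Finset.sum_le_sum
              intro i _
              have : ‖((WithLp.equiv 2 (Fin (N-1) → ℝ)).symm (v - w)) i‖ ≤ ‖v - w‖ :=
                norm_le_pi_norm (v - w) i
              exact pow_le_pow_left₀ (norm_nonneg _) this 2
          _ = (N - 1 : ℕ) * ‖v - w‖^2 := by
              rw [Finset.sum_const, Finset.card_univ, Fintype.card_fin]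
              simp [nsmul_eq_mul]
      calc Real.sqrt (∑ i, ‖((WithLp.equiv 2 (Fin (N-1) → ℝ)).symm (v - w)) i‖^2)
          ≤ Real.sqrt ((N - 1 : ℕ) * ‖v - w‖^2) := Real.sqrt_le_sqrt hsum
        _ = Real.sqrt d * ‖v - w‖ := by
            rw [Real.sqrt_mul (by positivity) , Real.sqrt_sq (norm_nonneg _), hdcast]
    exact hnorm2
  -- Claim 5 : hausdorff measure of cube
  have hcubemeas : μH[d] cube = ENNReal.ofReal ((2*ρc)^(N-1)) := by
    have hH : (μH[((N-1:ℕ):ℝ)] : Measure (Fin (N-1) → ℝ)) = volume := by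
      have := MeasureTheory.hausdorffMeasure_pi_real (ι := Fin (N-1))
      simpa using this
    rw [← hdcast, hH, hcube, volume_pi_pi]
    simp only [Real.volume_Icc]
    rw [Finset.prod_const, Finset.card_univ, Fintype.card_fin]
    rw [← ENNReal.ofReal_pow (by linarith)]
    congr 1
    ring_nf
  -- chain
  calc μH[d] {ω : EuclideanSpace ℝ (Fin N) | ‖ω‖ = 1 ∧ c ≤ ⟪u, ω⟫}
      ≤ μH[d] (F '' D) := measure_mono hsub1
    _ ≤ (Real.toNNReal (1/c) : ℝ≥0∞)^d * μH[d] D := hlip1.hausdorffMeasure_image_le hd0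
    _ ≤ (Real.toNNReal (1/c) : ℝ≥0∞)^d * μH[d] (G '' cube) := by
        exact mul_le_mul_right (measure_mono hsub2) _
    _ ≤ (Real.toNNReal (1/c) : ℝ≥0∞)^d *
          ((Real.toNNReal (Real.sqrt d) : ℝ≥0∞)^d * μH[d] cube) := by
        exact mul_le_mul_right (hlip2.hausdorffMeasure_image_le hd0 cube) _
    _ = ENNReal.ofReal ((1/c)^d * ((Real.sqrt d)^d * (2*ρc)^(N-1))) := by
        rw [hcubemeas]
        rw [ENNReal.ofReal_mul (by positivity), ENNReal.ofReal_mul (by positivity)]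
        congr 1
        · rw [← ENNReal.ofReal_rpow_of_pos (by positivity)]
          rfl
        · congr 1
          rw [← ENNReal.ofReal_rpow_of_pos (Real.sqrt_pos.mpr (by linarith))]
          rfl
    _ ≤ ENNReal.ofReal ((4 * Real.sqrt d / c) ^ d * (1 - c) ^ (d/2)) := by
        apply ENNReal.ofReal_le_ofReal
        have hA : (0:ℝ) ≤ Real.sqrt d := Real.sqrt_nonneg d
        have h2ρ : (2*ρc)^(N-1) = (2*ρc)^d := by
          rw [← hdcast, Real.rpow_natCast]
        rw [h2ρ]
        have step1 : (1/c)^d * ((Real.sqrt d)^d * (2*ρc)^d)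
            = (2 * Real.sqrt d / c)^d * ρc^d := by
          rw [← Real.mul_rpow (by positivity) (by positivity),
              ← Real.mul_rpow (by positivity) (by positivity),
              ← Real.mul_rpow (by positivity) (by positivity)]
          congr 1
          ring
        have step2 : ρc^d = (1 - c^2)^(d/2) := by
          rw [hρc_def, Real.sqrt_eq_rpow, ← Real.rpow_mul h1c2]
          congr 1
          ring
        rw [step1, step2]
        have h2c : (1 - c^2) ≤ 2*(1-c) := by nlinarith
        have e1 : (1 - c^2)^(d/2) ≤ (2*(1-c))^(d/2) :=
          Real.rpow_le_rpow h1c2 h2c (by positivity)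
        have e2 : (2*(1-c))^(d/2) = 2^(d/2) * (1-c)^(d/2) :=
          Real.mul_rpow (by norm_num) (by linarith)
        have e3 : (2:ℝ)^(d/2) ≤ 2^d := Real.rpow_le_rpow_of_exponent_le one_le_two (by linarith)
        have e4 : (2*Real.sqrt d/c)^d * 2^d = (4*Real.sqrt d/c)^d := by
          rw [← Real.mul_rpow (by positivity) (by norm_num)]
          congr 1
          ring
        have e5 : (0:ℝ) ≤ (1-c)^(d/2) := Real.rpow_nonneg (by linarith) _
        calc (2*Real.sqrt d/c)^d * (1-c^2)^(d/2)
            ≤ (2*Real.sqrt d/c)^d * (2^(d/2) * (1-c)^(d/2)) := by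
              rw [← e2]; exact mul_le_mul_of_nonneg_left e1 (by positivity)
          _ ≤ (2*Real.sqrt d/c)^d * (2^d * (1-c)^(d/2)) := by
              apply mul_le_mul_of_nonneg_left _ (by positivity)
              exact mul_le_mul_of_nonneg_right e3 e5
          _ = (4*Real.sqrt d/c)^d * (1-c)^(d/2) := by rw [← mul_assoc, e4]

lemma aux_sphere_fin (N : ℕ) (hN : 2 ≤ N) :
    μH[(N : ℝ) - 1] (Metric.sphere (0 : EuclideanSpace ℝ (Fin N)) 1)
      ≤ ENNReal.ofReal (2 * N * (4 * Real.sqrt ((N:ℝ)-1) * Real.sqrt N) ^ ((N:ℝ)-1)) := by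
  have hN0 : (0:ℝ) < (N:ℝ) := by positivity
  have hN2 : (2:ℝ) ≤ (N:ℝ) := by exact_mod_cast hN
  have hsN1 : (1:ℝ) ≤ Real.sqrt N := by
    rw [show (1:ℝ) = Real.sqrt 1 by simp]
    exact Real.sqrt_le_sqrt (by linarith)
  have hsN0 : (0:ℝ) < Real.sqrt N := by linarith
  set c : ℝ := (Real.sqrt N)⁻¹ with hc
  have hc0 : 0 < c := by positivity
  have hc1 : c ≤ 1 := by
    rw [hc]
    exact inv_le_one_of_one_le₀ hsN1
  have hcsq : c^2 = (N:ℝ)⁻¹ := by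
    rw [hc, inv_pow, Real.sq_sqrt hN0.le]
  set d : ℝ := (N:ℝ) - 1 with hd_def
  set B : ℝ := (4 * Real.sqrt d / c) ^ d * (1 - c) ^ (d/2) with hB
  have hBalt : B ≤ (4 * Real.sqrt d * Real.sqrt N) ^ d := by
    rw [hB]
    have h1 : (4 * Real.sqrt d / c) = 4 * Real.sqrt d * Real.sqrt N := by
      rw [hc, div_eq_mul_inv, inv_inv]
    rw [h1]
    have hd2 : (0:ℝ) ≤ d/2 := by rw [hd_def]; linarith
    have h2 : (1 - c) ^ (d/2) ≤ 1 :=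
      Real.rpow_le_one (by linarith) (by linarith) hd2
    have h3 : (0:ℝ) ≤ (4 * Real.sqrt d * Real.sqrt N) ^ d := Real.rpow_nonneg (by positivity) _
    nlinarith
  have hB0 : 0 ≤ B := by
    rw [hB]
    have := Real.rpow_nonneg (by positivity : (0:ℝ) ≤ 4 * Real.sqrt d / c) d
    have := Real.rpow_nonneg (by linarith : (0:ℝ) ≤ 1 - c) (d/2)
    positivity
  -- the caps
  set capset : EuclideanSpace ℝ (Fin N) → Set (EuclideanSpace ℝ (Fin N)) :=
    fun u => {ω | ‖ω‖ = 1 ∧ c ≤ ⟪u, ω⟫} with hcapset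
  -- covering
  have hcover : Metric.sphere (0 : EuclideanSpace ℝ (Fin N)) 1 ⊆
      ⋃ i : Fin N, (capset (EuclideanSpace.single i (1:ℝ))
        ∪ capset (-EuclideanSpace.single i (1:ℝ))) := by
    intro ω hω
    have hω1 : ‖ω‖ = 1 := by
      rwa [mem_sphere_zero_iff_norm] at hω
    have hsum : ∑ i, (ω i)^2 = 1 := by
      have h := EuclideanSpace.norm_eq ω
      rw [hω1] at h
      have h2 := congrArg (fun t : ℝ => t^2) h
      simp only at h2
      rw [Real.sq_sqrt (by positivity)] at h2
      simp only [Real.norm_eq_abs, sq_abs] at h2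
      linarith [h2]
    obtain ⟨i, hi⟩ : ∃ i, c^2 ≤ (ω i)^2 := by
      by_contra hcon
      push_neg at hcon
      have hlt : ∑ i, (ω i)^2 < ∑ _i : Fin N, c^2 :=
        Finset.sum_lt_sum_of_nonempty (by simp [Finset.univ_nonempty_iff]; exact Fin.pos_iff_nonempty.mp (by omega)) (fun i _ => hcon i)
      rw [hsum, Finset.sum_const, Finset.card_univ, Fintype.card_fin, nsmul_eq_mul, hcsq] at hlt
      rw [mul_inv_cancel₀ (by positivity)] at hlt
      exact lt_irrefl _ hlt
    have habs : c ≤ |ω i| := by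
      rw [← Real.sqrt_sq hc0.le, ← Real.sqrt_sq (abs_nonneg (ω i)), sq_abs]
      exact Real.sqrt_le_sqrt hi
    have hinner : ⟪EuclideanSpace.single i (1:ℝ), ω⟫ = ω i := by
      rw [EuclideanSpace.inner_single_left]
      simp
    rcases le_or_gt 0 (ω i) with hsign | hsign
    · refine mem_iUnion.mpr ⟨i, Or.inl ⟨hω1, ?_⟩⟩
      rw [hinner]
      rwa [abs_of_nonneg hsign] at habs
    · refine mem_iUnion.mpr ⟨i, Or.inr ⟨hω1, ?_⟩⟩
      rw [inner_neg_left, hinner]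
      rwa [abs_of_neg hsign] at habs
  have hcapb : ∀ u : EuclideanSpace ℝ (Fin N), ‖u‖ = 1 →
      μH[d] (capset u) ≤ ENNReal.ofReal B :=
    fun u hu => aux_cap N hN u hu c hc0 hc1
  calc μH[d] (Metric.sphere (0 : EuclideanSpace ℝ (Fin N)) 1)
      ≤ μH[d] (⋃ i : Fin N, (capset (EuclideanSpace.single i (1:ℝ))
          ∪ capset (-EuclideanSpace.single i (1:ℝ)))) := measure_mono hcover
    _ ≤ ∑' i : Fin N, μH[d] (capset (EuclideanSpace.single i (1:ℝ))
          ∪ capset (-EuclideanSpace.single i (1:ℝ))) := measure_iUnion_le _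
    _ = ∑ i : Fin N, μH[d] (capset (EuclideanSpace.single i (1:ℝ))
          ∪ capset (-EuclideanSpace.single i (1:ℝ))) := tsum_fintype _
    _ ≤ ∑ _i : Fin N, (ENNReal.ofReal B + ENNReal.ofReal B) := by
        apply Finset.sum_le_sum
        intro i _
        calc μH[d] (capset (EuclideanSpace.single i (1:ℝ))
              ∪ capset (-EuclideanSpace.single i (1:ℝ)))
            ≤ μH[d] (capset (EuclideanSpace.single i (1:ℝ)))
              + μH[d] (capset (-EuclideanSpace.single i (1:ℝ))) := measure_union_le _ _
          _ ≤ ENNReal.ofReal B + ENNReal.ofReal B := by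
              apply add_le_add
              · exact hcapb _ (by rw [EuclideanSpace.norm_single]; simp)
              · exact hcapb _ (by rw [norm_neg, EuclideanSpace.norm_single]; simp)
    _ = (N : ℝ≥0∞) * (ENNReal.ofReal B + ENNReal.ofReal B) := by
        rw [Finset.sum_const, Finset.card_univ, Fintype.card_fin, nsmul_eq_mul]
    _ ≤ ENNReal.ofReal (2 * N * (4 * Real.sqrt d * Real.sqrt N) ^ d) := by
        rw [← ENNReal.ofReal_add hB0 hB0, ← ENNReal.ofReal_natCast N,
          ← ENNReal.ofReal_mul (by positivity)]
        apply ENNReal.ofReal_le_ofReal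
        have : (B + B) ≤ 2 * (4 * Real.sqrt d * Real.sqrt N) ^ d := by linarith
        nlinarith [hBalt, hB0, hN0]

set_option maxHeartbeats 1600000 in
lemma aux_pointwise (N : ℕ) (hN : 2 ≤ N)
    (φ : EuclideanSpace ℝ (Fin N) → ℝ)
    (hφ : ∀ x, φ x = ∫ ω in Metric.sphere (0 : EuclideanSpace ℝ (Fin N)) 1,
        Real.exp (inner ℝ x ω) ∂(μH[(N : ℝ) - 1])) :
    ∃ C > 0, ∀ x, φ x ≤ C * (Real.exp ‖x‖ * (1 + ‖x‖) ^ (-(((N:ℝ)-1)/2))) := by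
  set d : ℝ := (N:ℝ) - 1 with hd_def
  have hN2 : (2:ℝ) ≤ (N:ℝ) := by exact_mod_cast hN
  have hd1 : (1:ℝ) ≤ d := by rw [hd_def]; linarith
  have hd0 : (0:ℝ) ≤ d := by linarith
  set m : ℝ := d / 2 with hm_def
  have hm0 : (0:ℝ) ≤ m := by rw [hm_def]; linarith
  set S := Metric.sphere (0 : EuclideanSpace ℝ (Fin N)) 1 with hS
  have hSmeas : MeasurableSet S := Metric.isClosed_sphere.measurableSet
  set μ : Measure (EuclideanSpace ℝ (Fin N)) := μH[d] with hμ
  have hfin : μ S < ⊤ :=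
    lt_of_le_of_lt (aux_sphere_fin N hN) ENNReal.ofReal_lt_top
  set σS : ℝ := (μ S).toReal with hσS
  have hσS0 : 0 ≤ σS := ENNReal.toReal_nonneg
  haveI hfinR : IsFiniteMeasure (μ.restrict S) :=
    ⟨by rw [Measure.restrict_apply_univ]; exact hfin⟩
  set K : ℝ := (8 * Real.sqrt d) ^ d + σS * 2 ^ m with hK
  have h8d : (0:ℝ) ≤ (8 * Real.sqrt d) ^ d := Real.rpow_nonneg (by positivity) _
  have h2m : (0:ℝ) < (2:ℝ) ^ m := Real.rpow_pos_of_pos (by norm_num) _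
  have hK0 : 0 ≤ K := by rw [hK]; positivity
  -- uniform cap bound
  have capb : ∀ u : EuclideanSpace ℝ (Fin N), ‖u‖ = 1 → ∀ c : ℝ, c ≤ 1 →
      (μ {ω | ‖ω‖ = 1 ∧ c ≤ ⟪u, ω⟫}).toReal ≤ K * (1 - c) ^ m := by
    intro u hu c hc1
    have hsub : {ω : EuclideanSpace ℝ (Fin N) | ‖ω‖ = 1 ∧ c ≤ ⟪u, ω⟫} ⊆ S := by
      rintro ω ⟨h1, _⟩
      rwa [hS, mem_sphere_zero_iff_norm]
    have hfincap : μ {ω : EuclideanSpace ℝ (Fin N) | ‖ω‖ = 1 ∧ c ≤ ⟪u, ω⟫} ≠ ⊤ :=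
      (lt_of_le_of_lt (measure_mono hsub) hfin).ne
    have h1c : (0:ℝ) ≤ 1 - c := by linarith
    have h1cm : (0:ℝ) ≤ (1-c) ^ m := Real.rpow_nonneg h1c _
    rcases le_or_gt c (1/2) with hc | hc
    · -- use total sphere measure
      have h1 : (μ {ω : EuclideanSpace ℝ (Fin N) | ‖ω‖ = 1 ∧ c ≤ ⟪u, ω⟫}).toReal ≤ σS := by
        rw [hσS]
        exact ENNReal.toReal_mono hfin.ne (measure_mono hsub)
      have h2 : σS ≤ σS * 2^m * (1-c)^m := by
        have ha : ((1:ℝ)/2) ^ m ≤ (1-c)^m :=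
          Real.rpow_le_rpow (by norm_num) (by linarith) hm0
        have hb : (2:ℝ)^m * ((1:ℝ)/2)^m = 1 := by
          rw [← Real.mul_rpow (by norm_num) (by norm_num)]
          norm_num
        calc σS = σS * ((2:ℝ)^m * ((1:ℝ)/2)^m) := by rw [hb, mul_one]
          _ = σS * 2^m * ((1:ℝ)/2)^m := by ring
          _ ≤ σS * 2^m * (1-c)^m := by
              apply mul_le_mul_of_nonneg_left ha (by positivity)
      calc (μ {ω : EuclideanSpace ℝ (Fin N) | ‖ω‖ = 1 ∧ c ≤ ⟪u, ω⟫}).toReal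
          ≤ σS * 2^m * (1-c)^m := le_trans h1 h2
        _ ≤ K * (1-c)^m := by
            apply mul_le_mul_of_nonneg_right _ h1cm
            rw [hK]; linarith
    · -- use cap bound
      have hc0 : (0:ℝ) < c := by linarith
      have h1 := aux_cap N hN u hu c hc0 hc1
      rw [← hd_def, ← hμ] at h1
      have h2 : (μ {ω : EuclideanSpace ℝ (Fin N) | ‖ω‖ = 1 ∧ c ≤ ⟪u, ω⟫}).toReal
          ≤ (4 * Real.sqrt d / c) ^ d * (1 - c) ^ m := by
        rw [hm_def]
        apply ENNReal.toReal_le_of_le_ofReal _ h1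
        have := Real.rpow_nonneg (by positivity : (0:ℝ) ≤ 4 * Real.sqrt d / c) d
        have := Real.rpow_nonneg h1c (d/2)
        positivity
      have h3 : (4 * Real.sqrt d / c) ^ d ≤ (8 * Real.sqrt d) ^ d := by
        apply Real.rpow_le_rpow (by positivity) _ hd0
        rw [div_le_iff₀ hc0]
        have hs : (0:ℝ) < Real.sqrt d := Real.sqrt_pos.mpr (by linarith)
        nlinarith
      calc (μ {ω : EuclideanSpace ℝ (Fin N) | ‖ω‖ = 1 ∧ c ≤ ⟪u, ω⟫}).toReal
          ≤ (4 * Real.sqrt d / c) ^ d * (1 - c) ^ m := h2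
        _ ≤ (8 * Real.sqrt d) ^ d * (1 - c) ^ m :=
            mul_le_mul_of_nonneg_right h3 h1cm
        _ ≤ K * (1-c)^m := by
            apply mul_le_mul_of_nonneg_right _ h1cm
            rw [hK]; nlinarith
  -- gamma-type constant
  set Cγ : ℝ := ∫ s in Ioi (0:ℝ), Real.exp (-s) * s ^ m with hCγ
  have hCγint : IntegrableOn (fun s : ℝ => Real.exp (-s) * s ^ m) (Ioi 0) := by
    have := Real.GammaIntegral_convergent (s := m + 1) (by linarith)
    simpa using this
  have hCγ0 : 0 ≤ Cγ := by
    rw [hCγ]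
    apply setIntegral_nonneg measurableSet_Ioi
    intro s hs
    have : (0:ℝ) < s := hs
    positivity
  -- integrability of the inner function
  have hint_inner : ∀ x : EuclideanSpace ℝ (Fin N),
      IntegrableOn (fun ω => Real.exp ⟪x, ω⟫) S μ := by
    intro x
    have hcont : Continuous fun ω : EuclideanSpace ℝ (Fin N) => Real.exp ⟪x, ω⟫ :=
      Real.continuous_exp.comp (Continuous.inner continuous_const continuous_id)
    apply Integrable.mono' (integrable_const (Real.exp ‖x‖)) hcont.aestronglyMeasurable
    filter_upwards [ae_restrict_mem hSmeas] with ω hω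
    rw [Real.norm_eq_abs, abs_of_pos (Real.exp_pos _), Real.exp_le_exp]
    have h1 : ‖ω‖ = 1 := by rwa [hS, mem_sphere_zero_iff_norm] at hω
    calc ⟪x, ω⟫ ≤ ‖x‖ * ‖ω‖ := real_inner_le_norm x ω
      _ = ‖x‖ := by rw [h1, mul_one]
  -- crude bound
  have hcrude : ∀ x : EuclideanSpace ℝ (Fin N), φ x ≤ σS * Real.exp ‖x‖ := by
    intro x
    rw [hφ x]
    calc (∫ ω in S, Real.exp (inner ℝ x ω) ∂μ)
        ≤ ∫ _ω in S, Real.exp ‖x‖ ∂μ := by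
          apply setIntegral_mono_on (hint_inner x)
            (integrableOn_const hfin.ne) hSmeas
          intro ω hω
          rw [Real.exp_le_exp]
          have h1 : ‖ω‖ = 1 := by rwa [hS, mem_sphere_zero_iff_norm] at hω
          calc ⟪x, ω⟫ ≤ ‖x‖ * ‖ω‖ := real_inner_le_norm x ω
            _ = ‖x‖ := by rw [h1, mul_one]
      _ = σS * Real.exp ‖x‖ := by rw [setIntegral_const, measureReal_def, smul_eq_mul, hσS]
  -- nonnegativity of φ is not needed; core layer cake bound:
  have core : ∀ x : EuclideanSpace ℝ (Fin N), 0 < ‖x‖ →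
      φ x ≤ σS * Real.exp (-‖x‖) + K * Cγ * (Real.exp ‖x‖ * ‖x‖ ^ (-m)) := by
    intro x hr
    set r : ℝ := ‖x‖ with hrdef
    set u : EuclideanSpace ℝ (Fin N) := r⁻¹ • x with hudef
    have hu : ‖u‖ = 1 := by
      rw [hudef, norm_smul, Real.norm_eq_abs, abs_of_pos (inv_pos.mpr hr), ← hrdef]
      field_simp
    have hxu : ∀ ω : EuclideanSpace ℝ (Fin N), ⟪x, ω⟫ = r * ⟪u, ω⟫ := by
      intro ω
      rw [hudef, real_inner_smul_left]
      field_simp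
    have hinb : ∀ ω ∈ S, -r ≤ ⟪x, ω⟫ ∧ ⟪x, ω⟫ ≤ r := by
      intro ω hω
      have h1 : ‖ω‖ = 1 := by rwa [hS, mem_sphere_zero_iff_norm] at hω
      have h2 : |⟪x, ω⟫| ≤ r := by
        rw [hrdef]
        calc |⟪x, ω⟫| ≤ ‖x‖ * ‖ω‖ := abs_real_inner_le_norm x ω
          _ = ‖x‖ := by rw [h1, mul_one]
      exact ⟨neg_le_of_abs_le h2, le_of_abs_le h2⟩
    set G : EuclideanSpace ℝ (Fin N) → ℝ → ℝ :=
      fun ω t => if t ≤ ⟪x, ω⟫ then Real.exp t else 0 with hG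
    set ν : Measure ℝ := volume.restrict (Ioc (-r) r) with hν
    haveI : IsFiniteMeasure ν :=
      ⟨by rw [hν, Measure.restrict_apply_univ]; exact measure_Ioc_lt_top⟩
    -- layer cake pointwise
    have hlayer : ∀ ω ∈ S, Real.exp ⟪x, ω⟫ = Real.exp (-r) + ∫ t, G ω t ∂ν := by
      intro ω hω
      obtain ⟨hl, hr'⟩ := hinb ω hω
      have h1 : (∫ t, G ω t ∂ν) = ∫ t in Ioc (-r) ⟪x,ω⟫, Real.exp t := by
        have h2 : G ω = (Iic ⟪x,ω⟫).indicator Real.exp := by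
          funext t
          simp [hG, Set.indicator_apply, mem_Iic]
        rw [hν, h2, setIntegral_indicator measurableSet_Iic, Set.Ioc_inter_Iic,
          min_eq_right hr']
      rw [h1, ← intervalIntegral.integral_of_le hl, integral_exp]
      ring
    -- measurability
    have hset : MeasurableSet {q : EuclideanSpace ℝ (Fin N) × ℝ | q.2 ≤ ⟪x, q.1⟫} := by
      apply measurableSet_le measurable_snd
      exact (Continuous.inner continuous_const continuous_fst).measurable
    have hGm : Measurable (Function.uncurry G) := by
      have h1 : Function.uncurry G
          = Set.indicator {q : EuclideanSpace ℝ (Fin N) × ℝ | q.2 ≤ ⟪x, q.1⟫}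
            (fun q => Real.exp q.2) := by
        funext q
        cases q with
        | mk ω t => simp [Function.uncurry, hG, Set.indicator_apply]
      rw [h1]
      exact (Real.measurable_exp.comp measurable_snd).indicator hset
    -- integrability on the product
    have haet : ∀ᵐ q ∂((μ.restrict S).prod ν), q.2 ∈ Ioc (-r) r := by
      rw [ae_iff]
      have h1 : {q : EuclideanSpace ℝ (Fin N) × ℝ | ¬ q.2 ∈ Ioc (-r) r}
          = univ ×ˢ (Ioc (-r) r)ᶜ := by
        ext q; simp
      rw [h1, Measure.prod_prod]
      have h2 : ν (Ioc (-r) r)ᶜ = 0 := by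
        rw [hν, Measure.restrict_apply (measurableSet_Ioc.compl), compl_inter_self]
        exact measure_empty
      rw [h2, mul_zero]
    have hGint : Integrable (Function.uncurry G) ((μ.restrict S).prod ν) := by
      apply Integrable.mono' (integrable_const (Real.exp r)) hGm.aestronglyMeasurable
      filter_upwards [haet] with q hq
      obtain ⟨ω, t⟩ := q
      simp only [Function.uncurry_apply_pair, hG]
      rw [Real.norm_eq_abs]
      split_ifs with hcase
      · rw [abs_of_pos (Real.exp_pos _), Real.exp_le_exp]
        exact hq.2
      · rw [abs_zero]
        exact (Real.exp_pos r).le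
    -- swap
    have hswap : (∫ ω, (∫ t, G ω t ∂ν) ∂(μ.restrict S))
        = ∫ t, (∫ ω, G ω t ∂(μ.restrict S)) ∂ν :=
      integral_integral_swap hGint
    -- inner integral at fixed t
    have hcapmeas : ∀ t : ℝ, MeasurableSet {ω : EuclideanSpace ℝ (Fin N) | t ≤ ⟪x, ω⟫} :=
      fun t => measurableSet_le measurable_const
        (Continuous.inner continuous_const continuous_id).measurable
    have hinner_int : ∀ t : ℝ, (∫ ω, G ω t ∂(μ.restrict S))
        = Real.exp t * (μ (S ∩ {ω | t ≤ ⟪x, ω⟫})).toReal := by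
      intro t
      have h1 : (fun ω => G ω t)
          = Set.indicator {ω : EuclideanSpace ℝ (Fin N) | t ≤ ⟪x, ω⟫}
            (fun _ => Real.exp t) := by
        funext ω
        simp [hG, Set.indicator_apply]
      rw [h1, setIntegral_indicator (hcapmeas t), setIntegral_const, measureReal_def, smul_eq_mul, mul_comm]
    -- cap bound in terms of t
    have hcapb2 : ∀ t ∈ Ioc (-r) r, (μ (S ∩ {ω | t ≤ ⟪x, ω⟫})).toReal
        ≤ K * (1 - t/r) ^ m := by
      intro t ht
      have hteq : S ∩ {ω : EuclideanSpace ℝ (Fin N) | t ≤ ⟪x, ω⟫}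
          = {ω : EuclideanSpace ℝ (Fin N) | ‖ω‖ = 1 ∧ t/r ≤ ⟪u, ω⟫} := by
        ext ω
        simp only [hS, mem_inter_iff, mem_sphere_zero_iff_norm, mem_setOf_eq]
        constructor
        · rintro ⟨h1, h2⟩
          refine ⟨h1, ?_⟩
          rw [hxu ω] at h2
          rw [div_le_iff₀ hr]
          linarith
        · rintro ⟨h1, h2⟩
          refine ⟨h1, ?_⟩
          rw [hxu ω]
          rw [div_le_iff₀ hr] at h2
          linarith
      rw [hteq]
      exact capb u hu (t/r) (by rw [div_le_one hr]; exact ht.2)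
    -- representation of φ x
    have hφx : φ x = σS * Real.exp (-r) + ∫ t, (∫ ω, G ω t ∂(μ.restrict S)) ∂ν := by
      rw [hφ x]
      have h1 : (∫ ω in S, Real.exp (inner ℝ x ω) ∂μ)
          = ∫ ω in S, (Real.exp (-r) + ∫ t, G ω t ∂ν) ∂μ :=
        setIntegral_congr_fun hSmeas (fun ω hω => hlayer ω hω)
      have h2 : (∫ ω in Metric.sphere (0 : EuclideanSpace ℝ (Fin N)) 1,
          Real.exp (inner ℝ x ω) ∂(μH[(N : ℝ) - 1])) = ∫ ω in S, Real.exp (inner ℝ x ω) ∂μ := rfl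
      have hadd : (∫ ω in S, (Real.exp (-r) + ∫ t, G ω t ∂ν) ∂μ)
          = (∫ _ω in S, Real.exp (-r) ∂μ) + ∫ ω in S, (∫ t, G ω t ∂ν) ∂μ := by
        apply integral_add (integrable_const _)
        have h0 := hGint.integral_prod_left
        simpa only [Function.uncurry_apply_pair] using h0
      rw [h2, h1, hadd, setIntegral_const, measureReal_def, smul_eq_mul, ← hσS, hswap]
    -- bound on the double integral
    have hrm0 : (0:ℝ) ≤ r ^ (-m) := Real.rpow_nonneg hr.le _
    have hgcont : Continuous (fun t : ℝ => (K * r^(-m) * Real.exp r)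
        * (Real.exp (-(r - t)) * (r-t)^m)) := by
      apply Continuous.mul continuous_const
      apply Continuous.mul
      · fun_prop
      · apply Continuous.rpow_const (by fun_prop)
        intro t
        right; exact hm0
    have hmono : (∫ t, (∫ ω, G ω t ∂(μ.restrict S)) ∂ν)
        ≤ K * Cγ * (Real.exp r * r ^ (-m)) := by
      have hfun : (fun t => ∫ ω, G ω t ∂(μ.restrict S))
          = fun t => Real.exp t * (μ (S ∩ {ω | t ≤ ⟪x, ω⟫})).toReal := funext hinner_int
      have hintL : Integrable (fun t => ∫ ω, G ω t ∂(μ.restrict S)) ν := by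
        have h0 := hGint.integral_prod_right
        simpa only [Function.uncurry_apply_pair] using h0
      have hgint : Integrable (fun t : ℝ => (K * r^(-m) * Real.exp r)
          * (Real.exp (-(r - t)) * (r-t)^m)) ν :=
        (hgcont.integrableOn_Icc (a := -r) (b := r)).mono_set Ioc_subset_Icc_self
      calc (∫ t, (∫ ω, G ω t ∂(μ.restrict S)) ∂ν)
          ≤ ∫ t, (K * r^(-m) * Real.exp r) * (Real.exp (-(r - t)) * (r-t)^m) ∂ν := by
            rw [hfun]
            apply setIntegral_mono_on (hfun ▸ hintL) hgint measurableSet_Ioc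
            intro t ht
            have h1 := hcapb2 t ht
            have hrt0 : (0:ℝ) ≤ r - t := by linarith [ht.2]
            have h2 : (1 - t/r) = (r - t)/r := by field_simp
            have h3 : (1 - t/r)^m = (r-t)^m * r^(-m) := by
              rw [h2, Real.div_rpow hrt0 hr.le, Real.rpow_neg hr.le, div_eq_mul_inv]
            have h4 : Real.exp t = Real.exp r * Real.exp (-(r - t)) := by
              rw [← Real.exp_add]; ring_nf
            calc Real.exp t * (μ (S ∩ {ω | t ≤ ⟪x, ω⟫})).toReal
                ≤ Real.exp t * (K * (1 - t/r)^m) :=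
                  mul_le_mul_of_nonneg_left h1 (Real.exp_nonneg t)
              _ = (K * r^(-m) * Real.exp r) * (Real.exp (-(r - t)) * (r-t)^m) := by
                  rw [h3, h4]; ring
        _ = (K * r^(-m) * Real.exp r) * ∫ t, Real.exp (-(r - t)) * (r-t)^m ∂ν :=
            integral_const_mul _ _
        _ ≤ (K * r^(-m) * Real.exp r) * Cγ := by
            apply mul_le_mul_of_nonneg_left _ (by positivity)
            have hchg : (∫ t, Real.exp (-(r - t)) * (r-t)^m ∂ν)
                = ∫ s in Ioc (0:ℝ) (2*r), Real.exp (-s) * s^m := by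
              rw [hν]
              rw [← intervalIntegral.integral_of_le (by linarith : -r ≤ r)]
              rw [intervalIntegral.integral_comp_sub_left
                (fun s => Real.exp (-s) * s^m) r]
              rw [intervalIntegral.integral_of_le (by linarith : r - r ≤ r - -r)]
              have : r - r = 0 := by ring
              have h2 : r - -r = 2*r := by ring
              rw [this, h2]
            rw [hchg, hCγ]
            apply setIntegral_mono_set hCγint
            · filter_upwards [ae_restrict_mem measurableSet_Ioi] with s hs
              have : (0:ℝ) < s := hs
              positivity
            · apply HasSubset.Subset.eventuallyLE
              intro s hs
              exact hs.1
        _ = K * Cγ * (Real.exp r * r ^ (-m)) := by ring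
    rw [hφx]
    linarith
  -- final assembly
  obtain ⟨M, hM, hMb⟩ := aux_poly_exp m 2 hm0 (by norm_num)
  refine ⟨σS * M + K * Cγ * 2^m + σS * 2^m + 1, by positivity, fun x => ?_⟩
  set r : ℝ := ‖x‖ with hrdef
  have hr0 : 0 ≤ r := norm_nonneg x
  have h1r : (0:ℝ) < 1 + r := by linarith
  have hpm : (0:ℝ) ≤ (1+r) ^ (-m) := Real.rpow_nonneg h1r.le _
  have h2mr : (2:ℝ) ^ (-m) ≤ (1+r)^(-m) ∨ True := Or.inr trivial
  rcases lt_or_ge r 1 with hcase | hcase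
  · -- crude regime
    have h1 : φ x ≤ σS * Real.exp r := hcrude x
    have h2 : (2:ℝ)^(-m) ≤ (1+r)^(-m) :=
      Real.rpow_le_rpow_of_nonpos h1r (by linarith) (by linarith)
    have h3 : σS ≤ (σS * 2^m) * (1+r)^(-m) := by
      have h4 : (2:ℝ)^m * 2^(-m) = 1 := by
        rw [← Real.rpow_add (by norm_num : (0:ℝ) < 2)]
        simp
      calc σS = (σS * 2^m) * 2^(-m) := by
            rw [mul_assoc, h4, mul_one]
        _ ≤ (σS * 2^m) * (1+r)^(-m) :=
            mul_le_mul_of_nonneg_left h2 (by positivity)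
    calc φ x ≤ σS * Real.exp r := h1
      _ ≤ ((σS * 2^m) * (1+r)^(-m)) * Real.exp r := by
          apply mul_le_mul_of_nonneg_right h3 (Real.exp_nonneg _)
      _ ≤ (σS * M + K * Cγ * 2^m + σS * 2^m + 1) * (Real.exp r * (1+r)^(-m)) := by
          have hKCγ : 0 ≤ K * Cγ * 2^m := by positivity
          have hσM : 0 ≤ σS * M := by positivity
          have he : (0:ℝ) ≤ Real.exp r * (1+r)^(-m) := by positivity
          nlinarith [he]
  · -- layer cake regime
    have hrpos : 0 < r := by linarith
    have h1 := core x hrpos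
    rw [← hrdef] at h1
    -- bound each term
    have hterm1 : σS * Real.exp (-r) ≤ σS * M * (Real.exp r * (1+r)^(-m)) := by
      have hexp : Real.exp (-r) = Real.exp r * Real.exp (-(2*r)) := by
        rw [← Real.exp_add]; ring_nf
      have hMr := hMb r hr0
      have hpoweq : (1+r)^(-m) * (1+r)^m = 1 := by
        rw [← Real.rpow_add h1r]; simp
      have h2 : Real.exp (-(2*r)) ≤ (1+r)^(-m) * M := by
        calc Real.exp (-(2*r)) = ((1+r)^(-m) * (1+r)^m) * Real.exp (-(2*r)) := by
              rw [hpoweq, one_mul]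
          _ = (1+r)^(-m) * ((1+r)^m * Real.exp (-(2*r))) := by ring
          _ ≤ (1+r)^(-m) * M := mul_le_mul_of_nonneg_left hMr hpm
      calc σS * Real.exp (-r) = σS * (Real.exp r * Real.exp (-(2*r))) := by rw [hexp]
        _ ≤ σS * (Real.exp r * ((1+r)^(-m) * M)) := by
            apply mul_le_mul_of_nonneg_left _ hσS0
            exact mul_le_mul_of_nonneg_left h2 (Real.exp_nonneg _)
        _ = σS * M * (Real.exp r * (1+r)^(-m)) := by ring
    have hterm2 : K * Cγ * (Real.exp r * r^(-m))
        ≤ K * Cγ * 2^m * (Real.exp r * (1+r)^(-m)) := by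
      have h2 : r^(-m) ≤ 2^m * (1+r)^(-m) := by
        have h3 : (2*r : ℝ)^(-m) ≤ (1+r)^(-m) :=
          Real.rpow_le_rpow_of_nonpos h1r (by linarith) (by linarith)
        have h4 : (2*r : ℝ)^(-m) = 2^(-m) * r^(-m) :=
          Real.mul_rpow (by norm_num) hr0
        have h5 : (2:ℝ)^m * 2^(-m) = 1 := by
          rw [← Real.rpow_add (by norm_num : (0:ℝ) < 2)]; simp
        calc r^(-m) = (2^m * 2^(-m)) * r^(-m) := by rw [h5, one_mul]
          _ = 2^m * ((2*r)^(-m)) := by rw [h4]; ring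
          _ ≤ 2^m * (1+r)^(-m) := mul_le_mul_of_nonneg_left h3 (by positivity)
      calc K * Cγ * (Real.exp r * r^(-m))
          ≤ K * Cγ * (Real.exp r * (2^m * (1+r)^(-m))) := by
            apply mul_le_mul_of_nonneg_left _ (by positivity)
            exact mul_le_mul_of_nonneg_left h2 (Real.exp_nonneg _)
        _ = K * Cγ * 2^m * (Real.exp r * (1+r)^(-m)) := by ring
    have he : (0:ℝ) ≤ Real.exp r * (1+r)^(-m) := by positivity
    calc φ x ≤ σS * Real.exp (-r) + K * Cγ * (Real.exp r * r^(-m)) := h1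
      _ ≤ σS * M * (Real.exp r * (1+r)^(-m)) + K * Cγ * 2^m * (Real.exp r * (1+r)^(-m)) :=
          add_le_add hterm1 hterm2
      _ ≤ (σS * M + K * Cγ * 2^m + σS * 2^m + 1) * (Real.exp r * (1+r)^(-m)) := by
          have h9 : (0:ℝ) ≤ (σS * 2^m + 1) * (Real.exp r * (1+r)^(-m)) := by positivity
          nlinarith [h9]

set_option maxHeartbeats 1600000 in
theorem stmt_11 (N : ℕ) (hN : 2 ≤ N) (p : ℝ) (hp : 1 < p)
    (p' : ℝ) (hp' : p' = p / (p - 1))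
    (φ : EuclideanSpace ℝ (Fin N) → ℝ)
    (hφ : ∀ x, φ x = ∫ ω in Metric.sphere (0 : EuclideanSpace ℝ (Fin N)) 1,
        Real.exp (inner ℝ x ω) ∂(μH[(N : ℝ) - 1])) :
    ∃ C > (0:ℝ), ∀ ρ ≥ (1:ℝ),
      (∫ x in Metric.ball (0 : EuclideanSpace ℝ (Fin N)) ρ, (φ x) ^ p')
        ≤ C * (1 + ρ) ^ ((N : ℝ) - 1 - ((N : ℝ) - 1) / 2 * p') * Real.exp (p' * ρ) := by
  have hp1 : (0:ℝ) < p - 1 := by linarith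
  have hp'1 : 1 < p' := by
    rw [hp', lt_div_iff₀ hp1]; linarith
  have hp'0 : (0:ℝ) < p' := by linarith
  set m : ℝ := ((N:ℝ)-1)/2 with hm_def
  set α : ℝ := (N:ℝ) - 1 - ((N:ℝ)-1)/2 * p' with hα_def
  obtain ⟨C₀, hC₀, hpt⟩ := aux_pointwise N hN φ hφ
  obtain ⟨C₁, hC₁, h1D⟩ := aux_oneD α p' hp'1.le
  have hφ0 : ∀ x, 0 ≤ φ x := by
    intro x
    rw [hφ x]
    apply integral_nonneg
    intro ω
    positivity
  haveI : Nontrivial (EuclideanSpace ℝ (Fin N)) := by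
    apply Module.nontrivial_of_finrank_pos (R := ℝ)
    rw [finrank_euclideanSpace_fin]
    omega
  have hdim : Module.finrank ℝ (EuclideanSpace ℝ (Fin N)) = N := finrank_euclideanSpace_fin
  set κ : ℝ := (volume (Metric.ball (0:EuclideanSpace ℝ (Fin N)) 1)).toReal with hκ
  have hκ0 : 0 < κ := by
    rw [hκ]
    apply ENNReal.toReal_pos
    · exact (Metric.measure_ball_pos volume 0 one_pos).ne'
    · exact (MeasureTheory.measure_ball_lt_top).ne
  -- the radial majorant
  set g : ℝ → ℝ := fun s => (C₀ * (Real.exp s * (1 + s) ^ (-m))) ^ p' with hg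
  have hgcont : ContinuousOn g (Ici 0) := by
    apply ContinuousOn.rpow_const
    · apply ContinuousOn.mul continuousOn_const
      apply ContinuousOn.mul (Real.continuous_exp.continuousOn)
      apply ContinuousOn.rpow_const (by fun_prop)
      intro s hs
      simp only [mem_Ici] at hs
      left; positivity
    · intro s _
      right; exact hp'0.le
  have hg0 : ∀ s : ℝ, 0 ≤ s → 0 ≤ g s := by
    intro s hs
    simp only [hg]
    apply Real.rpow_nonneg
    have : (0:ℝ) ≤ (1+s) ^ (-m) := Real.rpow_nonneg (by linarith) _
    positivity
  refine ⟨(N:ℝ) * κ * C₀ ^ p' * C₁, by positivity, fun ρ hρ => ?_⟩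
  have hρ0 : (0:ℝ) < ρ := by linarith
  -- step 1 : pointwise bound, integral comparison on the ball
  have hgint : IntegrableOn (fun x : EuclideanSpace ℝ (Fin N) => g ‖x‖)
      (Metric.ball (0:EuclideanSpace ℝ (Fin N)) ρ) := by
    have h1 : ContinuousOn (fun x : EuclideanSpace ℝ (Fin N) => g ‖x‖)
        (Metric.closedBall (0:EuclideanSpace ℝ (Fin N)) ρ) := by
      apply hgcont.comp continuous_norm.continuousOn
      intro x _
      exact norm_nonneg x
    exact (h1.integrableOn_compact (isCompact_closedBall _ _)).mono_set
      Metric.ball_subset_closedBall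
  have hstep1 : (∫ x in Metric.ball (0:EuclideanSpace ℝ (Fin N)) ρ, (φ x) ^ p')
      ≤ ∫ x in Metric.ball (0:EuclideanSpace ℝ (Fin N)) ρ, g ‖x‖ := by
    apply integral_mono_of_nonneg
    · filter_upwards with x
      exact Real.rpow_nonneg (hφ0 x) p'
    · exact hgint
    · filter_upwards with x
      simp only [hg]
      exact Real.rpow_le_rpow (hφ0 x) (hpt x) hp'0.le
  -- step 2 : polar coordinates
  set f₁ : ℝ → ℝ := fun s => if s < ρ then g s else 0 with hf₁
  have hstep2 : (∫ x in Metric.ball (0:EuclideanSpace ℝ (Fin N)) ρ, g ‖x‖)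
      = (N:ℝ) * κ * ∫ y in Ioo (0:ℝ) ρ, y ^ (N-1) * g y := by
    have h1 : (∫ x in Metric.ball (0:EuclideanSpace ℝ (Fin N)) ρ, g ‖x‖)
        = ∫ x : EuclideanSpace ℝ (Fin N), f₁ ‖x‖ := by
      rw [← integral_indicator measurableSet_ball]
      congr 1
      funext x
      simp only [hf₁]
      by_cases hx : ‖x‖ < ρ
      · rw [Set.indicator_of_mem (mem_ball_zero_iff.mpr hx), if_pos hx]
      · rw [Set.indicator_of_notMem (fun h => hx (mem_ball_zero_iff.mp h)), if_neg hx]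
    rw [h1, MeasureTheory.integral_fun_norm_addHaar volume f₁, hdim]
    have h2 : (∫ y in Ioi (0:ℝ), y ^ (N-1) • f₁ y)
        = ∫ y in Ioo (0:ℝ) ρ, y ^ (N-1) * g y := by
      have h3 : ∀ y : ℝ, y ^ (N-1) • f₁ y
          = (Iio ρ).indicator (fun y => y ^ (N-1) * g y) y := by
        intro y
        simp only [hf₁, Set.indicator_apply, mem_Iio, smul_eq_mul]
        by_cases hy : y < ρ
        · rw [if_pos hy, if_pos hy]
        · rw [if_neg hy, if_neg hy, mul_zero]
      calc (∫ y in Ioi (0:ℝ), y ^ (N-1) • f₁ y)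
          = ∫ y in Ioi (0:ℝ), (Iio ρ).indicator (fun y => y ^ (N-1) * g y) y :=
            setIntegral_congr_fun measurableSet_Ioi (fun y _ => h3 y)
        _ = ∫ y in Ioi (0:ℝ) ∩ Iio ρ, y ^ (N-1) * g y :=
            setIntegral_indicator measurableSet_Iio
        _ = ∫ y in Ioo (0:ℝ) ρ, y ^ (N-1) * g y := by rw [Set.Ioi_inter_Iio]
    rw [h2, nsmul_eq_mul, smul_eq_mul, hκ, measureReal_def]
    ring
  -- step 3 : compare with the 1-D integrand
  have hstep3 : (∫ y in Ioo (0:ℝ) ρ, y ^ (N-1) * g y)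
      ≤ C₀ ^ p' * ∫ y in Ioo (0:ℝ) ρ, (1+y) ^ α * Real.exp (p' * y) := by
    rw [← integral_const_mul]
    apply setIntegral_mono_on
    · have h4 : ContinuousOn (fun y : ℝ => y ^ (N-1) * g y) (Icc 0 ρ) :=
        ContinuousOn.mul (by fun_prop) (hgcont.mono (fun y hy => hy.1))
      exact (h4.integrableOn_Icc).mono_set Ioo_subset_Icc_self
    · have h4 : ContinuousOn (fun y : ℝ => C₀ ^ p' * ((1+y) ^ α * Real.exp (p' * y)))
          (Icc 0 ρ) := by
        apply ContinuousOn.mul continuousOn_const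
        apply ContinuousOn.mul _ (by fun_prop)
        apply ContinuousOn.rpow_const (by fun_prop)
        intro y hy
        left
        have := hy.1
        positivity
      exact (h4.integrableOn_Icc).mono_set Ioo_subset_Icc_self
    · exact measurableSet_Ioo
    · intro y hy
      obtain ⟨hy0, hyρ⟩ := hy
      have h1y : (0:ℝ) < 1 + y := by linarith
      have hgy : g y = C₀ ^ p' * (Real.exp (p' * y) * (1+y) ^ (-(m * p'))) := by
        simp only [hg]
        have hb : (0:ℝ) ≤ (1+y) ^ (-m) := Real.rpow_nonneg h1y.le _
        rw [Real.mul_rpow hC₀.le (by positivity), Real.mul_rpow (Real.exp_nonneg y) hb]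
        have he : (Real.exp y) ^ p' = Real.exp (p' * y) := by
          rw [← Real.exp_mul, mul_comm]
        have hr : ((1+y) ^ (-m)) ^ p' = (1+y) ^ (-(m * p')) := by
          rw [← Real.rpow_mul h1y.le, neg_mul]
        rw [he, hr]
      calc y ^ (N-1) * g y
          ≤ (1+y) ^ (N-1) * g y := by
            apply mul_le_mul_of_nonneg_right _ (hg0 y hy0.le)
            exact pow_le_pow_left₀ hy0.le (by linarith) _
        _ = C₀ ^ p' * ((1+y) ^ α * Real.exp (p' * y)) := by
            rw [hgy]
            have hnat : ((1+y):ℝ) ^ (N-1) = (1+y) ^ (((N-1:ℕ)):ℝ) :=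
              (Real.rpow_natCast _ _).symm
            have hcast : ((N-1:ℕ):ℝ) = (N:ℝ) - 1 := by
              rw [Nat.cast_sub (by omega)]
              norm_num
            rw [hnat, hcast]
            rw [show (1+y)^((N:ℝ)-1) * (C₀^p' * (Real.exp (p'*y) * (1+y)^(-(m*p'))))
                = C₀^p' * (((1+y)^((N:ℝ)-1) * (1+y)^(-(m*p'))) * Real.exp (p'*y)) from by ring]
            rw [← Real.rpow_add h1y]
            have : (N:ℝ) - 1 + -(m*p') = α := by rw [hα_def, hm_def]; ring
            rw [this]
  -- step 4 : conclude
  have h1d := h1D ρ hρ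
  calc (∫ x in Metric.ball (0:EuclideanSpace ℝ (Fin N)) ρ, (φ x) ^ p')
      ≤ ∫ x in Metric.ball (0:EuclideanSpace ℝ (Fin N)) ρ, g ‖x‖ := hstep1
    _ = (N:ℝ) * κ * ∫ y in Ioo (0:ℝ) ρ, y ^ (N-1) * g y := hstep2
    _ ≤ (N:ℝ) * κ * (C₀ ^ p' * ∫ y in Ioo (0:ℝ) ρ, (1+y) ^ α * Real.exp (p' * y)) := by
        apply mul_le_mul_of_nonneg_left hstep3 (by positivity)
    _ ≤ (N:ℝ) * κ * (C₀ ^ p' * (C₁ * ((1 + ρ) ^ α * Real.exp (p' * ρ)))) := by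
        apply mul_le_mul_of_nonneg_left _ (by positivity)
        apply mul_le_mul_of_nonneg_left h1d (by positivity)
    _ = (N:ℝ) * κ * C₀ ^ p' * C₁ * (1 + ρ) ^ α * Real.exp (p' * ρ) := by ring
end
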